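/- arXiv:1704.06745 — 13 statements merged into one kernel-verified Lean document; each statement's English description precedes it below -/
import Mathlib

section
/- Let λ1 ≥ λ2 ≥ λ3 > 0 > λ4 ≥ λ5 ≥ −λ1 be real numbers with λ1 + λ2 + λ3 + λ4 + λ5 = 0 and λ1 + λ2 + λ4 + λ5 < 0. Then there exists a 5×5 nonnegative bisymmetric real matrix whose spectrum is λ1, λ2, λ3, λ4, λ5 if and only if λ1³ + λ2³ + λ3³ + λ4³ + λ5³ ≥ 0. -/
/-!
A nonnegative matrix has `tr Q³ ≥ 0`, and for symmetric `Q` this trace is the sum of the cubes of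
the eigenvalues; this gives necessity.

For sufficiency, a bisymmetric matrix preserves the `J`-symmetric and the `J`-skew vectors, so it
splits into a `3 × 3` and a `2 × 2` block. For the nonnegative family `bisymQ c r u v` the blocks
have characteristic polynomials `X³ - c X² - (r² + 2u² + 2v²) X - (4ruv - 2cv²)` and
`X² + c X - r²`, which we match with the roots `λ₁, λ₃, λ₄` and `λ₂, λ₅`. All coefficients but the
last are matched by choosing `c`, `r` and `u² + v²`; the last one then follows from the
intermediate value theorem on the quarter circle, and the condition it needs is exactly
`e₃(λ) ≥ 0`, which by Newton's identity (as `e₁(λ) = 0`) is `λ₁³ + ⋯ + λ₅³ ≥ 0`.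
-/

open Matrix Polynomial

/-- The 5×5 reverse identity (exchange) matrix. -/
def J5 : Matrix (Fin 5) (Fin 5) ℝ :=
  Matrix.of fun i j => if (i : ℕ) + (j : ℕ) = 4 then 1 else 0

namespace Matrix

variable {n : Type*} [Fintype n] [DecidableEq n]

theorem IsHermitian.trace_pow_eq_sum_roots_charpoly_pow {𝕜 : Type*} [RCLike 𝕜]
    {A : Matrix n n 𝕜} (hA : A.IsHermitian) (k : ℕ) :
    (A ^ k).trace = (A.charpoly.roots.map (· ^ k)).sum := by
  conv_lhs => rw [hA.spectral_theorem, ← map_pow, Unitary.conjStarAlgAut_apply, trace_mul_cycle,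
    Unitary.coe_star_mul_self, one_mul, diagonal_pow, trace_diagonal]
  simp [hA.roots_charpoly_eq_eigenvalues]

theorem trace_pow_nonneg {R : Type*} [CommSemiring R] [PartialOrder R] [IsOrderedRing R]
    {A : Matrix n n R} (hA : ∀ i j, 0 ≤ A i j) (k : ℕ) : 0 ≤ (A ^ k).trace :=
  Finset.sum_nonneg fun i _ => pow_apply_nonneg hA k i i

end Matrix

theorem sum_pow_three_nonneg_of_charpoly_eq {Q : Matrix (Fin 5) (Fin 5) ℝ} {l1 l2 l3 l4 l5 : ℝ}
    (hQ_nonneg : ∀ i j, 0 ≤ Q i j) (hQ_symm : Q = Qᵀ)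
    (hQ_charpoly :
      Q.charpoly = (X - C l1) * (X - C l2) * (X - C l3) * (X - C l4) * (X - C l5)) :
    0 ≤ l1 ^ 3 + l2 ^ 3 + l3 ^ 3 + l4 ^ 3 + l5 ^ 3 := by
  have hQ : Q.IsHermitian := by
    rw [IsHermitian, conjTranspose_eq_transpose_of_trivial, ← hQ_symm]
  have htrace := hQ.trace_pow_eq_sum_roots_charpoly_pow 3
  rw [hQ_charpoly] at htrace
  simp [roots_mul, X_sub_C_ne_zero] at htrace
  linarith [trace_pow_nonneg hQ_nonneg 3]

theorem exists_nonneg_sq_add_sq_eq_and_eq_of_mem_Icc (r c : ℝ) {s d : ℝ} (hs : 0 ≤ s)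
    (hd : d ∈ Set.Icc (-2 * c * s) 0) :
    ∃ u v : ℝ, 0 ≤ u ∧ 0 ≤ v ∧ u ^ 2 + v ^ 2 = s ∧ 4 * r * u * v - 2 * c * v ^ 2 = d := by
  set g : ℝ → ℝ := fun t => 4 * r * √(s - t ^ 2) * t - 2 * c * t ^ 2
  have hg : Continuous g := by fun_prop
  have hg_zero : g 0 = 0 := by simp [g]
  have hg_sqrt : g √s = -2 * c * s := by simp [g, Real.sq_sqrt hs]
  obtain ⟨v, ⟨hv_nonneg, hv_le⟩, hgv⟩ :=
    intermediate_value_Icc' (Real.sqrt_nonneg s) hg.continuousOn (hg_sqrt ▸ hg_zero ▸ hd)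
  have hv_sq : v ^ 2 ≤ s := (Real.le_sqrt hv_nonneg hs).mp hv_le
  refine ⟨√(s - v ^ 2), v, Real.sqrt_nonneg _, hv_nonneg, ?_, hgv⟩
  rw [Real.sq_sqrt (by linarith)]
  ring

def bisymQ (c r u v : ℝ) : Matrix (Fin 5) (Fin 5) ℝ :=
  !![0, r, u, 0, c; r, 0, v, 0, 0; u, v, 0, v, u; 0, 0, v, 0, r; c, 0, u, r, 0]

theorem bisymQ_nonneg {c r u v : ℝ} (hc : 0 ≤ c) (hr : 0 ≤ r) (hu : 0 ≤ u) (hv : 0 ≤ v)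
    (i j : Fin 5) : 0 ≤ bisymQ c r u v i j := by
  fin_cases i <;> fin_cases j <;> simp [bisymQ, *]

section bisymQ

variable (c r u v : ℝ)

theorem bisymQ_transpose : (bisymQ c r u v)ᵀ = bisymQ c r u v := by
  ext i j
  fin_cases i <;> fin_cases j <;> rfl

theorem bisymQ_mul_J5 : bisymQ c r u v * J5 = J5 * bisymQ c r u v := by
  ext i j
  fin_cases i <;> fin_cases j <;> simp [bisymQ, J5, mul_apply, Fin.sum_univ_five]

/-- Its columns are `e₁ + e₅, e₂ + e₄, e₃` (fixed by `J5`) and `e₁ - e₅, e₂ - e₄` (negated). -/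
def symSkewBasis : Matrix (Fin 5) (Fin 5) ℝ :=
  !![1, 0, 0, 1, 0; 0, 1, 0, 0, 1; 0, 0, 1, 0, 0; 0, 1, 0, 0, -1; 1, 0, 0, -1, 0]

noncomputable def symSkewBasisInv : Matrix (Fin 5) (Fin 5) ℝ :=
  !![1/2, 0, 0, 0, 1/2; 0, 1/2, 0, 1/2, 0; 0, 0, 1, 0, 0; 1/2, 0, 0, 0, -1/2; 0, 1/2, 0, -1/2, 0]

theorem symSkewBasisInv_mul_symSkewBasis : symSkewBasisInv * symSkewBasis = 1 := by
  ext i j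
  fin_cases i <;> fin_cases j <;>
    simp [symSkewBasis, symSkewBasisInv, mul_apply, Fin.sum_univ_five, one_apply] <;> norm_num

theorem bisymQ_eq_conj :
    bisymQ c r u v = symSkewBasis *
      !![c, r, u, 0, 0; r, 0, v, 0, 0; 2 * u, 2 * v, 0, 0, 0; 0, 0, 0, -c, r; 0, 0, 0, r, 0] *
      symSkewBasisInv := by
  ext i j
  fin_cases i <;> fin_cases j <;>
    simp [bisymQ, symSkewBasis, symSkewBasisInv, mul_apply, Fin.sum_univ_five] <;> ring

theorem blockDiagonal_eq_reindex_fromBlocks :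
    !![c, r, u, 0, 0; r, 0, v, 0, 0; 2 * u, 2 * v, 0, 0, 0; 0, 0, 0, -c, r; 0, 0, 0, r, 0] =
      reindex finSumFinEquiv finSumFinEquiv
        (fromBlocks !![c, r, u; r, 0, v; 2 * u, 2 * v, 0] 0 0 !![-c, r; r, 0]) := by
  ext i j
  fin_cases i <;> fin_cases j <;> rfl

theorem charpoly_symBlock :
    (!![c, r, u; r, 0, v; 2 * u, 2 * v, 0] : Matrix (Fin 3) (Fin 3) ℝ).charpoly =
      X ^ 3 - C c * X ^ 2 - C (r ^ 2 + 2 * u ^ 2 + 2 * v ^ 2) * X -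
        C (4 * r * u * v - 2 * c * v ^ 2) := by
  rw [charpoly, det_fin_three]
  simp [map_ofNat]
  ring

theorem charpoly_skewBlock :
    (!![-c, r; r, 0] : Matrix (Fin 2) (Fin 2) ℝ).charpoly = X ^ 2 + C c * X - C (r ^ 2) := by
  rw [charpoly_fin_two]
  simp [trace_fin_two, det_fin_two]
  ring

theorem charpoly_bisymQ :
    (bisymQ c r u v).charpoly =
      (X ^ 3 - C c * X ^ 2 - C (r ^ 2 + 2 * u ^ 2 + 2 * v ^ 2) * X -
        C (4 * r * u * v - 2 * c * v ^ 2)) * (X ^ 2 + C c * X - C (r ^ 2)) := by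
  rw [bisymQ_eq_conj, charpoly_mul_comm, ← mul_assoc, symSkewBasisInv_mul_symSkewBasis, one_mul,
    blockDiagonal_eq_reindex_fromBlocks, charpoly_reindex, charpoly_fromBlocks_zero₁₂,
    charpoly_symBlock, charpoly_skewBlock]

end bisymQ

theorem charpoly_bisymQ_eq_prod {c r u v a b d e f : ℝ} (hc : c = a + b + d) (hc' : c = -(e + f))
    (hr : r ^ 2 = -(e * f)) (he₂ : r ^ 2 + 2 * u ^ 2 + 2 * v ^ 2 = -(a * b + a * d + b * d))
    (he₃ : 4 * r * u * v - 2 * c * v ^ 2 = a * b * d) :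
    (bisymQ c r u v).charpoly = (X - C a) * (X - C b) * (X - C d) * (X - C e) * (X - C f) := by
  rw [charpoly_bisymQ, he₂, he₃, hr]
  nth_rewrite 1 [hc]
  rw [hc']
  simp only [map_add, map_mul, map_neg]
  ring

theorem exists_bisymQ_charpoly_eq {l1 l2 l3 l4 l5 : ℝ}
    (h23 : l2 ≥ l3) (h3 : l3 > 0) (h4 : 0 > l4) (h45 : l4 ≥ l5) (h5 : l5 ≥ -l1)
    (hsum : l1 + l2 + l3 + l4 + l5 = 0)
    (hcubes : l1 ^ 3 + l2 ^ 3 + l3 ^ 3 + l4 ^ 3 + l5 ^ 3 ≥ 0) :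
    ∃ c r u v : ℝ, 0 ≤ c ∧ 0 ≤ r ∧ 0 ≤ u ∧ 0 ≤ v ∧
      (bisymQ c r u v).charpoly =
        (X - C l1) * (X - C l2) * (X - C l3) * (X - C l4) * (X - C l5) := by
  set c := -(l2 + l5)
  set F := -(l1 * l3 + l1 * l4 + l3 * l4) + l2 * l5
  have hc : 0 < c := by linarith
  have hr : 0 ≤ -(l2 * l5) := by nlinarith
  have he₃ : l1 * l3 * l4 < 0 := mul_neg_of_pos_of_neg (mul_pos (by linarith) h3) h4
  -- `c F + λ₁λ₃λ₄ = e₃(λ)`, and Newton's identity `p₃ = 3 e₃` holds because `e₁(λ) = 0`.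
  have hnewton : c * F + l1 * l3 * l4 = (l1 ^ 3 + l2 ^ 3 + l3 ^ 3 + l4 ^ 3 + l5 ^ 3) / 3 := by
    obtain rfl : l5 = -(l1 + l2 + l3 + l4) := by linarith
    ring
  have hF : 0 ≤ F := by nlinarith
  obtain ⟨u, v, hu, hv, huv, hq⟩ := exists_nonneg_sq_add_sq_eq_and_eq_of_mem_Icc √(-(l2 * l5)) c
    (s := F / 2) (by linarith) ⟨by linarith, he₃.le⟩
  refine ⟨c, √(-(l2 * l5)), u, v, hc.le, Real.sqrt_nonneg _, hu, hv, ?_⟩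
  rw [charpoly_bisymQ_eq_prod (a := l1) (b := l3) (d := l4) (e := l2) (f := l5) (by linarith) rfl
    (Real.sq_sqrt hr) (by rw [Real.sq_sqrt hr]; linear_combination 2 * huv) hq]
  ring

theorem stmt_1_general (l1 l2 l3 l4 l5 : ℝ)
    (h23 : l2 ≥ l3) (h3 : l3 > 0) (h4 : 0 > l4) (h45 : l4 ≥ l5)
    (h5 : l5 ≥ -l1)
    (hsum : l1 + l2 + l3 + l4 + l5 = 0) :
    (∃ Q : Matrix (Fin 5) (Fin 5) ℝ,
        (∀ i j, 0 ≤ Q i j) ∧ Q = Qᵀ ∧ Q * J5 = J5 * Q ∧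
        Q.charpoly = (X - C l1) * (X - C l2) * (X - C l3) * (X - C l4) * (X - C l5))
    ↔ l1 ^ 3 + l2 ^ 3 + l3 ^ 3 + l4 ^ 3 + l5 ^ 3 ≥ 0 := by
  constructor
  · rintro ⟨Q, hQ_nonneg, hQ_symm, -, hQ_charpoly⟩
    exact sum_pow_three_nonneg_of_charpoly_eq hQ_nonneg hQ_symm hQ_charpoly
  · intro hcubes
    obtain ⟨c, r, u, v, hc, hr, hu, hv, hcharpoly⟩ :=
      exists_bisymQ_charpoly_eq h23 h3 h4 h45 h5 hsum hcubes
    exact ⟨bisymQ c r u v, bisymQ_nonneg hc hr hu hv, (bisymQ_transpose c r u v).symm,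
      bisymQ_mul_J5 c r u v, hcharpoly⟩

theorem stmt_1 (l1 l2 l3 l4 l5 : ℝ)
    (h12 : l1 ≥ l2) (h23 : l2 ≥ l3) (h3 : l3 > 0) (h4 : 0 > l4) (h45 : l4 ≥ l5)
    (h5 : l5 ≥ -l1)
    (hsum : l1 + l2 + l3 + l4 + l5 = 0)
    (hneg : l1 + l2 + l4 + l5 < 0) :
    (∃ Q : Matrix (Fin 5) (Fin 5) ℝ,
        (∀ i j, 0 ≤ Q i j) ∧ Q = Qᵀ ∧ Q * J5 = J5 * Q ∧
        Q.charpoly = (X - C l1) * (X - C l2) * (X - C l3) * (X - C l4) * (X - C l5))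
    ↔ l1 ^ 3 + l2 ^ 3 + l3 ^ 3 + l4 ^ 3 + l5 ^ 3 ≥ 0 :=
  stmt_1_general l1 l2 l3 l4 l5 h23 h3 h4 h45 h5 hsum
end

section
/- Let 1 ≥ λ2 ≥ λ3 > 0 > λ4 ≥ λ5 ≥ −1 be real numbers such that 1 + λ2 + λ3 + λ4 + λ5 = 0 and 1 + λ2³ + λ3³ + λ4³ + λ5³ ≥ 0. If 1 + λ2 + λ4 + λ5 < 0, then λ2 + λ4 < 0 and λ2·λ4 − λ3·λ5 − λ3 − λ5 ≥ (λ3·λ5)/(λ2 + λ4). -/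
/-! With `s = λ₂ + λ₄`, the relation `1 + λ₂ + λ₃ + λ₄ + λ₅ = 0` turns the cubic power sum into
`3 (λ₃λ₅ - s (λ₂λ₄ - λ₃λ₅ - λ₃ - λ₅))`, so the claimed inequality is the cubic condition divided
by `s`, which is negative because `1 + λ₅ ≥ 0`. -/

theorem one_add_cubes_eq_of_one_add_add_eq_zero {R : Type*} [CommRing R] {a b c d : R}
    (h : 1 + a + b + c + d = 0) :
    1 + a ^ 3 + b ^ 3 + c ^ 3 + d ^ 3 = 3 * (b * d - (a + c) * (a * c - b * d - b - d)) := by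
  obtain rfl : d = -1 - a - b - c := by linear_combination h
  ring

theorem stmt_3_general (l2 l3 l4 l5 : ℝ)
    (h5 : l5 ≥ -1)
    (hsum : 1 + l2 + l3 + l4 + l5 = 0)
    (hcube : 1 + l2 ^ 3 + l3 ^ 3 + l4 ^ 3 + l5 ^ 3 ≥ 0)
    (hneg : 1 + l2 + l4 + l5 < 0) :
    l2 + l4 < 0 ∧ l2 * l4 - l3 * l5 - l3 - l5 ≥ l3 * l5 / (l2 + l4) := by
  have hs : l2 + l4 < 0 := by linarith
  refine ⟨hs, ?_⟩
  rw [ge_iff_le, div_le_iff_of_neg hs]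
  linarith [one_add_cubes_eq_of_one_add_add_eq_zero hsum]

theorem stmt_3 (l2 l3 l4 l5 : ℝ)
    (h12 : 1 ≥ l2) (h23 : l2 ≥ l3) (h3 : l3 > 0) (h4 : 0 > l4) (h45 : l4 ≥ l5)
    (h5 : l5 ≥ -1)
    (hsum : 1 + l2 + l3 + l4 + l5 = 0)
    (hcube : 1 + l2 ^ 3 + l3 ^ 3 + l4 ^ 3 + l5 ^ 3 ≥ 0)
    (hneg : 1 + l2 + l4 + l5 < 0) :
    l2 + l4 < 0 ∧ l2 * l4 - l3 * l5 - l3 - l5 ≥ l3 * l5 / (l2 + l4) :=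
  stmt_3_general l2 l3 l4 l5 h5 hsum hcube hneg
end

section
/- Let λ1 ≥ λ2 ≥ λ3 ≥ λ4 ≥ λ5 ≥ −λ1 be real numbers with λ1 + λ2 + λ3 + λ4 + λ5 ≥ 0. If at least one of the following conditions holds: (1) λ4 ≥ 0 or λ2 ≤ 0; (2) λ2 ≥ 0 > λ3 and λ1 + λ2 + λ3 + λ4 + λ5 ≥ λ2 + λ5; (3) λ3 ≥ 0 > λ4 and λ1 + λ2 + λ4 + λ5 ≥ 0; then there exists a 5×5 nonnegative bisymmetric real matrix whose spectrum is λ1, λ2, λ3, λ4, λ5. -/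
/-!
A bisymmetric 5×5 matrix `Q` preserves the `J`-symmetric vectors (spanned by `e₁ + e₅`, `e₂ + e₄`,
`e₃`) and the `J`-antisymmetric ones (spanned by `e₁ - e₅`, `e₂ - e₄`). In the orthonormal bases
`(e₁ ± e₅)/√2, (e₂ ± e₄)/√2, e₃` it becomes `M ⊕ N` with `M` a symmetric 3×3 and `N` a symmetric
2×2 matrix, and `Q` is nonnegative iff `M₁₁ ≥ |N₁₁|`, `M₁₂ ≥ |N₁₂|`, `M₂₂ ≥ |N₂₂|` and the last
column of `M` is nonnegative. So it suffices to split the five numbers into a triple and a pair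
and to realize them as spectra of such `M` and `N`, solving the characteristic equations for the
free entries.
-/

open Matrix Polynomial

section CharpolyFinTwoThree

variable {R : Type*} [CommRing R]

theorem charpoly_fin_two_eq_prod (M : Matrix (Fin 2) (Fin 2) R) (n₁ n₂ : R)
    (h₁ : M.trace = n₁ + n₂) (h₂ : M.det = n₁ * n₂) :
    M.charpoly = (X - C n₁) * (X - C n₂) := by
  have hM : M.charpoly = X ^ 2 - C M.trace * X + C M.det := by
    simp only [charpoly, det_fin_two, trace_fin_two, charmatrix_apply]
    simp
    ring
  rw [hM, h₁, h₂]
  simp only [map_add, map_mul]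
  ring

theorem charpoly_fin_three_eq_prod (M : Matrix (Fin 3) (Fin 3) R) (m₁ m₂ m₃ : R)
    (h₁ : M.trace = m₁ + m₂ + m₃)
    (h₂ : M 0 0 * M 1 1 - M 0 1 * M 1 0 + M 0 0 * M 2 2 - M 0 2 * M 2 0
      + M 1 1 * M 2 2 - M 1 2 * M 2 1 = m₁ * m₂ + m₁ * m₃ + m₂ * m₃)
    (h₃ : M.det = m₁ * m₂ * m₃) :
    M.charpoly = (X - C m₁) * (X - C m₂) * (X - C m₃) := by
  have hM : M.charpoly = X ^ 3 - C M.trace * X ^ 2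
      + C (M 0 0 * M 1 1 - M 0 1 * M 1 0 + M 0 0 * M 2 2 - M 0 2 * M 2 0
        + M 1 1 * M 2 2 - M 1 2 * M 2 1) * X - C M.det := by
    simp only [charpoly, det_fin_three, trace_fin_three, charmatrix_apply]
    simp
    ring
  rw [hM, h₁, h₂, h₃]
  simp only [map_add, map_mul]
  ring

end CharpolyFinTwoThree

def bisymm5 (a b c d e f g h k : ℝ) : Matrix (Fin 5) (Fin 5) ℝ :=
  !![a, b, c, d, e;
     b, f, g, h, d;
     c, g, k, g, c;
     d, h, g, f, b;
     e, d, c, b, a]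

def J5Eigenbasis : Matrix (Fin 5) (Fin 5) ℝ :=
  !![1, 0, 0, 1, 0;
     0, 1, 0, 0, 1;
     0, 0, 1, 0, 0;
     0, 1, 0, 0, -1;
     1, 0, 0, -1, 0]

noncomputable def J5EigenbasisInv : Matrix (Fin 5) (Fin 5) ℝ :=
  !![1/2, 0, 0, 0, 1/2;
     0, 1/2, 0, 1/2, 0;
     0, 0, 1, 0, 0;
     1/2, 0, 0, 0, -1/2;
     0, 1/2, 0, -1/2, 0]

theorem J5EigenbasisInv_mul : J5EigenbasisInv * J5Eigenbasis = 1 := by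
  ext i j
  fin_cases i <;> fin_cases j <;>
    norm_num [J5Eigenbasis, J5EigenbasisInv, mul_apply, Fin.sum_univ_succ, one_apply]

section Bisymm5

variable {a b c d e f g h k : ℝ}

theorem bisymm5_nonneg (ha : 0 ≤ a) (hb : 0 ≤ b) (hc : 0 ≤ c) (hd : 0 ≤ d) (he : 0 ≤ e)
    (hf : 0 ≤ f) (hg : 0 ≤ g) (hh : 0 ≤ h) (hk : 0 ≤ k) (i j : Fin 5) :
    0 ≤ bisymm5 a b c d e f g h k i j := by
  fin_cases i <;> fin_cases j <;> assumption

theorem bisymm5_transpose : (bisymm5 a b c d e f g h k)ᵀ = bisymm5 a b c d e f g h k := by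
  ext i j
  fin_cases i <;> fin_cases j <;> rfl

theorem bisymm5_mul_J5 : bisymm5 a b c d e f g h k * J5 = J5 * bisymm5 a b c d e f g h k := by
  ext i j
  fin_cases i <;> fin_cases j <;> simp [bisymm5, J5, mul_apply, Fin.sum_univ_five]

theorem bisymm5_eq_conj :
    bisymm5 a b c d e f g h k = J5Eigenbasis *
      !![a + e, b + d, c, 0, 0;
         b + d, f + h, g, 0, 0;
         2 * c, 2 * g, k, 0, 0;
         0, 0, 0, a - e, b - d;
         0, 0, 0, b - d, f - h] * J5EigenbasisInv := by
  ext i j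
  fin_cases i <;> fin_cases j <;>
    simp [bisymm5, J5Eigenbasis, J5EigenbasisInv, mul_apply, Fin.sum_univ_succ] <;> ring

theorem charpoly_bisymm5 :
    (bisymm5 a b c d e f g h k).charpoly =
      (!![a + e, b + d, c; b + d, f + h, g; 2 * c, 2 * g, k] : Matrix (Fin 3) (Fin 3) ℝ).charpoly *
        (!![a - e, b - d; b - d, f - h] : Matrix (Fin 2) (Fin 2) ℝ).charpoly := by
  have hblocks : reindex finSumFinEquiv finSumFinEquiv
      (fromBlocks !![a + e, b + d, c; b + d, f + h, g; 2 * c, 2 * g, k] 0 0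
        !![a - e, b - d; b - d, f - h]) =
      !![a + e, b + d, c, 0, 0;
         b + d, f + h, g, 0, 0;
         2 * c, 2 * g, k, 0, 0;
         0, 0, 0, a - e, b - d;
         0, 0, 0, b - d, f - h] := by
    ext i j
    fin_cases i <;> fin_cases j <;> rfl
  rw [bisymm5_eq_conj, charpoly_mul_comm, ← Matrix.mul_assoc, J5EigenbasisInv_mul,
    Matrix.one_mul, ← hblocks, charpoly_reindex, charpoly_fromBlocks_zero₁₂]

end Bisymm5

def NonnegBisymmRealizable (p : ℝ[X]) : Prop :=
  ∃ Q : Matrix (Fin 5) (Fin 5) ℝ,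
    (∀ i j, 0 ≤ Q i j) ∧ Q = Qᵀ ∧ Q * J5 = J5 * Q ∧ Q.charpoly = p

namespace NonnegBisymmRealizable

theorem of_blocks {m₁ m₂ m₃ n₁ n₂ : ℝ} (M₁₁ M₁₂ M₁₃ M₂₂ M₂₃ M₃₃ N₁₁ N₁₂ N₂₂ : ℝ)
    (h₁₁ : |N₁₁| ≤ M₁₁) (h₁₂ : |N₁₂| ≤ M₁₂) (h₂₂ : |N₂₂| ≤ M₂₂)
    (h₁₃ : 0 ≤ M₁₃) (h₂₃ : 0 ≤ M₂₃) (h₃₃ : 0 ≤ M₃₃)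
    (hM₁ : M₁₁ + M₂₂ + M₃₃ = m₁ + m₂ + m₃)
    (hM₂ : M₁₁ * M₂₂ + M₁₁ * M₃₃ + M₂₂ * M₃₃ - M₁₂ ^ 2 - M₁₃ ^ 2 - M₂₃ ^ 2
      = m₁ * m₂ + m₁ * m₃ + m₂ * m₃)
    (hM₃ : M₁₁ * M₂₂ * M₃₃ + 2 * M₁₂ * M₁₃ * M₂₃ - M₁₁ * M₂₃ ^ 2 - M₂₂ * M₁₃ ^ 2 - M₃₃ * M₁₂ ^ 2
      = m₁ * m₂ * m₃)
    (hN₁ : N₁₁ + N₂₂ = n₁ + n₂) (hN₂ : N₁₁ * N₂₂ - N₁₂ ^ 2 = n₁ * n₂) :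
    NonnegBisymmRealizable ((X - C m₁) * (X - C m₂) * (X - C m₃) * (X - C n₁) * (X - C n₂)) := by
  obtain ⟨h₁₁', h₁₁''⟩ := abs_le.1 h₁₁
  obtain ⟨h₁₂', h₁₂''⟩ := abs_le.1 h₁₂
  obtain ⟨h₂₂', h₂₂''⟩ := abs_le.1 h₂₂
  have hsqrt2 : √2 ^ 2 = 2 := Real.sq_sqrt zero_le_two
  have hc : 2 * (M₁₃ / √2) * (M₁₃ / √2) = M₁₃ ^ 2 := by rw [mul_assoc, ← sq, div_pow, hsqrt2]; ring
  have hg : 2 * (M₂₃ / √2) * (M₂₃ / √2) = M₂₃ ^ 2 := by rw [mul_assoc, ← sq, div_pow, hsqrt2]; ring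
  have hcg : 2 * (M₁₃ / √2) * (M₂₃ / √2) = M₁₃ * M₂₃ := by
    rw [mul_assoc, div_mul_div_comm, ← sq, hsqrt2]; ring
  refine ⟨bisymm5 ((M₁₁ + N₁₁) / 2) ((M₁₂ + N₁₂) / 2) (M₁₃ / √2) ((M₁₂ - N₁₂) / 2)
      ((M₁₁ - N₁₁) / 2) ((M₂₂ + N₂₂) / 2) (M₂₃ / √2) ((M₂₂ - N₂₂) / 2) M₃₃,
    bisymm5_nonneg (by linarith) (by linarith) (by positivity) (by linarith) (by linarith)
      (by linarith) (by positivity) (by linarith) h₃₃,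
    bisymm5_transpose.symm, bisymm5_mul_J5, ?_⟩
  rw [charpoly_bisymm5, charpoly_fin_three_eq_prod _ m₁ m₂ m₃ ?_ ?_ ?_,
    charpoly_fin_two_eq_prod _ n₁ n₂ ?_ ?_]
  · ring
  all_goals simp [trace_fin_two, trace_fin_three, det_fin_two, det_fin_three]
  · linear_combination hN₁
  · linear_combination hN₂
  · linear_combination hM₁
  · linear_combination hM₂ - hc - hg
  · linear_combination hM₃ + 2 * M₁₂ * hcg - M₁₁ * hg - M₂₂ * hc

section Cases

variable {l1 l2 l3 l4 l5 : ℝ}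

local notation "P₅" => (X - C l1) * (X - C l2) * (X - C l3) * (X - C l4) * (X - C l5)

theorem of_fourth_nonneg (h12 : l2 ≤ l1) (h24 : l4 ≤ l2) (h45 : l5 ≤ l4) (h5 : -l1 ≤ l5)
    (h3 : 0 ≤ l3) (h4 : 0 ≤ l4) : NonnegBisymmRealizable P₅ :=
  of_blocks l2 0 0 l1 0 l3 l4 0 l5 (abs_le.2 ⟨by linarith, h24⟩) (by simp)
    (abs_le.2 ⟨h5, by linarith⟩) le_rfl le_rfl h3 (by ring) (by ring) (by ring) (by ring) (by ring)

theorem of_second_nonpos (h12 : l2 ≤ l1) (h23 : l3 ≤ l2) (h34 : l4 ≤ l3) (h45 : l5 ≤ l4)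
    (h5 : -l1 ≤ l5) (hsum : 0 ≤ l1 + l2 + l3 + l4 + l5) (h2 : l2 ≤ 0) :
    NonnegBisymmRealizable P₅ := by
  set w := max (-l2 - l4 - l5) (l2 + l4 - l5)
  have hw₁ : -l2 - l4 - l5 ≤ w := le_max_left _ _
  have hw₂ : l2 + l4 - l5 ≤ w := le_max_right _ _
  have hw₃ : w ≤ l1 + l3 := max_le (by linarith) (by linarith)
  obtain ⟨y, hy, hy2⟩ : ∃ y, 0 ≤ y ∧ y ^ 2 = (l1 - w) * (w - l3) / 2 :=
    ⟨_, Real.sqrt_nonneg _, Real.sq_sqrt (by nlinarith)⟩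
  exact of_blocks ((w + l2) / 2) ((w - l2) / 2) y ((w + l2) / 2) y (l1 + l3 - w)
    ((l4 + l5) / 2) ((l4 - l5) / 2) ((l4 + l5) / 2)
    (abs_le.2 ⟨by linarith, by linarith⟩) (abs_le.2 ⟨by linarith, by linarith⟩)
    (abs_le.2 ⟨by linarith, by linarith⟩) hy hy (by linarith)
    (by ring) (by linear_combination -2 * hy2) (by linear_combination -2 * l2 * hy2)
    (by ring) (by ring)

theorem of_nonpos_pair (h4 : l4 ≤ 0) (hsum : 0 ≤ l1 + l2 + l3 + l4 + l5)
    (hsum5 : l1 + l2 + l3 + l4 + l5 + l5 < 0) (hx : 0 ≤ (l1 + l5) * (l2 + l5) * (l3 + l5))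
    (hz : 0 ≤ (l2 + l3 + l4 + l5) * (l1 + l3 + l4 + l5) * (l1 + l2 + l4 + l5)) :
    NonnegBisymmRealizable P₅ := by
  set s := l1 + l2 + l3 + l4 + l5
  have hD : 0 ≤ -(s + l5) := by linarith
  have hD₀ : s + l5 ≠ 0 := hsum5.ne
  -- the two remaining characteristic equations are linear in `x ^ 2` and `z ^ 2`
  obtain ⟨x, hx₀, hx2⟩ : ∃ x, 0 ≤ x ∧ x ^ 2 = (l1 + l5) * (l2 + l5) * (l3 + l5) / -(s + l5) :=
    ⟨_, Real.sqrt_nonneg _, Real.sq_sqrt (div_nonneg hx hD)⟩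
  obtain ⟨z, hz₀, hz2⟩ : ∃ z, 0 ≤ z ∧
      z ^ 2 = (l2 + l3 + l4 + l5) * (l1 + l3 + l4 + l5) * (l1 + l2 + l4 + l5) / -(s + l5) :=
    ⟨_, Real.sqrt_nonneg _, Real.sq_sqrt (div_nonneg hz hD)⟩
  refine of_blocks (-l4) x z (-l5) 0 s l4 0 l5
    (abs_le.2 ⟨by linarith, by linarith⟩) (by simpa using hx₀)
    (abs_le.2 ⟨by linarith, by linarith⟩) hz₀ le_rfl hsum (by ring) ?_ ?_ (by ring) (by ring)
  all_goals
    rw [hx2, hz2]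
    field_simp
    simp only [s]
    ring

theorem of_two_nonneg (h12 : l2 ≤ l1) (h23 : l3 ≤ l2) (h34 : l4 ≤ l3) (h45 : l5 ≤ l4)
    (h5 : -l1 ≤ l5) (hsum : 0 ≤ l1 + l2 + l3 + l4 + l5) (h2 : 0 ≤ l2) (h3 : l3 < 0)
    (hsum25 : l2 + l5 ≤ l1 + l2 + l3 + l4 + l5) :
    NonnegBisymmRealizable P₅ := by
  rcases le_or_gt 0 (l2 + l5) with h25 | h25
  · obtain ⟨r, hr, hr2⟩ : ∃ r, 0 ≤ r ∧ r ^ 2 = (l1 + l4) * (-l3 - l4) :=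
      ⟨_, Real.sqrt_nonneg _, Real.sq_sqrt (mul_nonneg (by linarith) (by linarith))⟩
    exact of_blocks (-l4) 0 r l2 0 (l1 + l3 + l4) l4 0 l5
      (abs_le.2 ⟨by linarith, by linarith⟩) (by simp) (abs_le.2 ⟨by linarith, by linarith⟩)
      hr le_rfl (by linarith)
      (by ring) (by linear_combination -hr2) (by linear_combination -l2 * hr2) (by ring) (by ring)
  rcases le_or_gt 0 (l1 + l3 + l4 + l5) with h1345 | h1345
  · obtain ⟨r, hr, hr2⟩ : ∃ r, 0 ≤ r ∧ r ^ 2 = (l1 + l3) * (-l3 - l5) :=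
      ⟨_, Real.sqrt_nonneg _, Real.sq_sqrt (mul_nonneg (by linarith) (by linarith))⟩
    have := of_blocks (m₁ := l1) (m₂ := l5) (m₃ := l2) (n₁ := l3) (n₂ := l4)
      (-l3) r 0 (l1 + l3 + l5) 0 l2 l3 0 l4
      (abs_le.2 ⟨by linarith, by linarith⟩) (by simpa using hr)
      (abs_le.2 ⟨by linarith, by linarith⟩) le_rfl le_rfl h2
      (by ring) (by linear_combination -hr2) (by linear_combination -l2 * hr2) (by ring) (by ring)
    convert this using 1
    ring
  exact of_nonpos_pair (by linarith) hsum (by linarith)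
    (mul_nonneg_of_nonpos_of_nonpos (mul_nonpos_of_nonneg_of_nonpos (by linarith) h25.le)
      (by linarith))
    (mul_nonneg (mul_nonneg_of_nonpos_of_nonpos (by linarith) h1345.le) (by linarith))

theorem of_three_nonneg (h12 : l2 ≤ l1) (h45 : l5 ≤ l4) (h5 : -l1 ≤ l5) (h3 : 0 ≤ l3)
    (h4 : l4 < 0) (h1245 : 0 ≤ l1 + l2 + l4 + l5) :
    NonnegBisymmRealizable P₅ := by
  set p := max l2 (-l4)
  have hp₁ : l2 ≤ p := le_max_left _ _
  have hp₂ : -l4 ≤ p := le_max_right _ _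
  have hp₃ : p ≤ l1 := max_le h12 (by linarith)
  have hp₄ : p ≤ l1 + l2 + l5 := max_le (by linarith) (by linarith)
  obtain ⟨r, hr, hr2⟩ : ∃ r, 0 ≤ r ∧ r ^ 2 = (l1 - p) * (p - l2) :=
    ⟨_, Real.sqrt_nonneg _, Real.sq_sqrt (mul_nonneg (by linarith) (by linarith))⟩
  exact of_blocks p r 0 (l1 + l2 - p) 0 l3 l4 0 l5
    (abs_le.2 ⟨by linarith, by linarith⟩) (by simpa using hr)
    (abs_le.2 ⟨by linarith, by linarith⟩) le_rfl le_rfl h3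
    (by ring) (by linear_combination -hr2) (by linear_combination -l3 * hr2) (by ring) (by ring)

end Cases

end NonnegBisymmRealizable

theorem stmt_4 (l1 l2 l3 l4 l5 : ℝ)
    (h12 : l1 ≥ l2) (h23 : l2 ≥ l3) (h34 : l3 ≥ l4) (h45 : l4 ≥ l5) (h5 : l5 ≥ -l1)
    (hsum : l1 + l2 + l3 + l4 + l5 ≥ 0)
    (hcond : (l4 ≥ 0 ∨ l2 ≤ 0) ∨
             (l2 ≥ 0 ∧ 0 > l3 ∧ l1 + l2 + l3 + l4 + l5 ≥ l2 + l5) ∨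
             (l3 ≥ 0 ∧ 0 > l4 ∧ l1 + l2 + l4 + l5 ≥ 0)) :
    ∃ Q : Matrix (Fin 5) (Fin 5) ℝ,
      (∀ i j, 0 ≤ Q i j) ∧ Q = Qᵀ ∧ Q * J5 = J5 * Q ∧
      Q.charpoly = (X - C l1) * (X - C l2) * (X - C l3) * (X - C l4) * (X - C l5) := by
  rcases hcond with (h4 | h2) | ⟨h2, h3, hs⟩ | ⟨h3, h4, hs⟩
  · exact NonnegBisymmRealizable.of_fourth_nonneg h12 (h34.trans h23) h45 h5 (h4.trans h34) h4
  · exact NonnegBisymmRealizable.of_second_nonpos h12 h23 h34 h45 h5 hsum h2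
  · exact NonnegBisymmRealizable.of_two_nonneg h12 h23 h34 h45 h5 hsum h2 h3 hs
  · exact NonnegBisymmRealizable.of_three_nonneg h12 h45 h5 h3 h4 hs
end

section
/- Let λ1 ≥ λ2 ≥ λ3 ≥ λ4 ≥ λ5 be real numbers with λ4 ≥ 0 and λ1 + λ5 ≥ 0. Then the 5×5 matrix L1 with rows ((λ1+λ5)/2, 0, 0, 0, (λ1−λ5)/2), (0, (λ2+λ4)/2, 0, (λ2−λ4)/2, 0), (0, 0, λ3, 0, 0), (0, (λ2−λ4)/2, 0, (λ2+λ4)/2, 0), ((λ1−λ5)/2, 0, 0, 0, (λ1+λ5)/2) is nonnegative and bisymmetric, and its spectrum is λ1, λ2, λ3, λ4, λ5. -/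
open Matrix Polynomial

/-!
The matrix is supported on its diagonal and antidiagonal, so it splits into the blocks
`[[a, b], [b, a]]` on the coordinates {1, 5} and {2, 4} and the 1×1 block `λ3`. Such a block has
characteristic polynomial `(X - a)² - b² = (X - (a + b)) (X - (a - b))`, and with
`a = (λ1 + λ5)/2, b = (λ1 - λ5)/2` (resp. `λ2, λ4`) the roots are `λ1, λ5` (resp. `λ2, λ4`).
-/

section CrossMatrix

variable {R : Type*}

def crossMatrix [Zero R] (a b c d e : R) : Matrix (Fin 5) (Fin 5) R :=
  !![a, 0, 0, 0, b;
     0, c, 0, d, 0;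
     0, 0, e, 0, 0;
     0, d, 0, c, 0;
     b, 0, 0, 0, a]

theorem crossMatrix_transpose [Zero R] (a b c d e : R) :
    (crossMatrix a b c d e)ᵀ = crossMatrix a b c d e := by
  ext i j
  fin_cases i <;> fin_cases j <;> rfl

theorem crossMatrix_nonneg [Zero R] [Preorder R] {a b c d e : R}
    (ha : 0 ≤ a) (hb : 0 ≤ b) (hc : 0 ≤ c) (hd : 0 ≤ d) (he : 0 ≤ e) (i j : Fin 5) :
    0 ≤ crossMatrix a b c d e i j := by
  fin_cases i <;> fin_cases j <;> simp [crossMatrix, *]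

theorem det_crossMatrix [CommRing R] (a b c d e : R) :
    (crossMatrix a b c d e).det = (a ^ 2 - b ^ 2) * (c ^ 2 - d ^ 2) * e := by
  simp [crossMatrix, Matrix.det_succ_row_zero, Fin.sum_univ_succ, Fin.succAbove]
  ring

theorem charmatrix_crossMatrix [CommRing R] (a b c d e : R) :
    (crossMatrix a b c d e).charmatrix =
      crossMatrix (X - C a) (-C b) (X - C c) (-C d) (X - C e) := by
  ext i j
  fin_cases i <;> fin_cases j <;> simp [crossMatrix]

theorem charpoly_crossMatrix [CommRing R] (a b c d e : R) :
    (crossMatrix a b c d e).charpoly =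
      ((X - C a) ^ 2 - C b ^ 2) * ((X - C c) ^ 2 - C d ^ 2) * (X - C e) := by
  rw [charpoly, charmatrix_crossMatrix, det_crossMatrix, neg_sq, neg_sq]

end CrossMatrix

theorem crossMatrix_mul_J5_comm (a b c d e : ℝ) :
    crossMatrix a b c d e * J5 = J5 * crossMatrix a b c d e := by
  ext i j
  fin_cases i <;> fin_cases j <;> simp [crossMatrix, J5, Matrix.mul_apply, Fin.sum_univ_succ]

theorem sq_X_sub_C_sub_C_sq {R : Type*} [CommRing R] (a b : R) :
    (X - C a) ^ 2 - C b ^ 2 = (X - C (a + b)) * (X - C (a - b)) := by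
  simp only [map_add, map_sub]
  ring

theorem stmt_5 (l1 l2 l3 l4 l5 : ℝ)
    (h12 : l1 ≥ l2) (h23 : l2 ≥ l3) (h34 : l3 ≥ l4) (h45 : l4 ≥ l5)
    (h4 : l4 ≥ 0) (h15 : l1 + l5 ≥ 0) :
    let L1 : Matrix (Fin 5) (Fin 5) ℝ :=
      !![(l1 + l5) / 2, 0, 0, 0, (l1 - l5) / 2;
         0, (l2 + l4) / 2, 0, (l2 - l4) / 2, 0;
         0, 0, l3, 0, 0;
         0, (l2 - l4) / 2, 0, (l2 + l4) / 2, 0;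
         (l1 - l5) / 2, 0, 0, 0, (l1 + l5) / 2]
    (∀ i j, 0 ≤ L1 i j) ∧ L1 = L1ᵀ ∧ L1 * J5 = J5 * L1 ∧
      L1.charpoly = (X - C l1) * (X - C l2) * (X - C l3) * (X - C l4) * (X - C l5) := by
  intro L1
  have hL1 : L1 = crossMatrix ((l1 + l5) / 2) ((l1 - l5) / 2) ((l2 + l4) / 2) ((l2 - l4) / 2) l3 :=
    rfl
  refine ⟨crossMatrix_nonneg (by linarith) (by linarith) (by linarith) (by linarith) (by linarith),
    (crossMatrix_transpose _ _ _ _ _).symm, crossMatrix_mul_J5_comm _ _ _ _ _, ?_⟩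
  rw [hL1, charpoly_crossMatrix, sq_X_sub_C_sub_C_sq, sq_X_sub_C_sub_C_sq,
    show (l1 + l5) / 2 + (l1 - l5) / 2 = l1 by ring, show (l1 + l5) / 2 - (l1 - l5) / 2 = l5 by ring,
    show (l2 + l4) / 2 + (l2 - l4) / 2 = l2 by ring, show (l2 + l4) / 2 - (l2 - l4) / 2 = l4 by ring]
  ring
end

section
/- Let λ1 ≥ 0 > λ2 ≥ λ3 ≥ λ4 ≥ λ5 ≥ −λ1 be real numbers with s := λ1 + λ2 + λ3 + λ4 + λ5 ≥ 0. Set a = (1/2)·√((λ1+λ5)(λ2+λ5)(λ3+λ4)/(λ1+λ2−λ3+λ5)), b = √(−(λ1+λ5)(λ2+λ5)(λ1+λ2+λ4+λ5)/(2(λ1+λ2−λ3+λ5))), and c = √(−(λ3+λ4)(λ1+λ2+λ4+λ5)/2). Then λ1+λ2−λ3+λ5 > 0, each quantity under a square root is nonnegative, and the 5×5 matrix L2 with rows (0, a, b, a, −λ5), (a, 0, c, −λ4, a), (b, c, s, c, b), (a, −λ4, c, 0, a), (−λ5, a, b, a, 0) is nonnegative and bisymmetric, and its spectrum is λ1, λ2,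 λ3, λ4, λ5. -/
/-!
`L2` is bisymmetric, so it preserves the vectors that are symmetric, resp. antisymmetric, under
the reversal `J5`. On the antisymmetric vectors `(x, y, 0, -y, -x)` it acts as `diag(λ5, λ4)`; on
the symmetric vectors `(x, y, z, y, x)` it acts as `!![-λ5, 2a, b; 2a, -λ4, c; 2b, 2c, s]`. The
trace of this block is `λ1 + λ2 + λ3`, and the values of `a²`, `b²`, `c²` and `abc` are exactly
what makes its sum of principal 2-minors and its determinant equal to the second and third
elementary symmetric functions of `λ1, λ2, λ3`. The radicands are nonnegative because
`λ1 + λ5 ≥ 0`, `λ2 + λ5 < 0`, `λ3 + λ4 < 0` and `λ1 + λ2 + λ4 + λ5 > 0`.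
-/

open Matrix Polynomial

def bisymmetricFive {α : Type*} (m₁₁ m₁₂ m₁₃ m₁₄ m₁₅ m₂₂ m₂₃ m₂₄ m₃₃ : α) :
    Matrix (Fin 5) (Fin 5) α :=
  !![m₁₁, m₁₂, m₁₃, m₁₄, m₁₅;
     m₁₂, m₂₂, m₂₃, m₂₄, m₁₄;
     m₁₃, m₂₃, m₃₃, m₂₃, m₁₃;
     m₁₄, m₂₄, m₂₃, m₂₂, m₁₂;
     m₁₅, m₁₄, m₁₃, m₁₂, m₁₁]

section BisymmetricFive

variable {α : Type*} (m₁₁ m₁₂ m₁₃ m₁₄ m₁₅ m₂₂ m₂₃ m₂₄ m₃₃ : α)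

theorem transpose_bisymmetricFive :
    (bisymmetricFive m₁₁ m₁₂ m₁₃ m₁₄ m₁₅ m₂₂ m₂₃ m₂₄ m₃₃)ᵀ =
      bisymmetricFive m₁₁ m₁₂ m₁₃ m₁₄ m₁₅ m₂₂ m₂₃ m₂₄ m₃₃ := by
  ext i j
  fin_cases i <;> fin_cases j <;> rfl

theorem bisymmetricFive_nonneg [Zero α] [LE α] (h₁₁ : 0 ≤ m₁₁) (h₁₂ : 0 ≤ m₁₂) (h₁₃ : 0 ≤ m₁₃)
    (h₁₄ : 0 ≤ m₁₄) (h₁₅ : 0 ≤ m₁₅) (h₂₂ : 0 ≤ m₂₂) (h₂₃ : 0 ≤ m₂₃) (h₂₄ : 0 ≤ m₂₄)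
    (h₃₃ : 0 ≤ m₃₃) (i j : Fin 5) :
    0 ≤ bisymmetricFive m₁₁ m₁₂ m₁₃ m₁₄ m₁₅ m₂₂ m₂₃ m₂₄ m₃₃ i j := by
  fin_cases i <;> fin_cases j <;> assumption

end BisymmetricFive

theorem bisymmetricFive_mul_J5 (m₁₁ m₁₂ m₁₃ m₁₄ m₁₅ m₂₂ m₂₃ m₂₄ m₃₃ : ℝ) :
    bisymmetricFive m₁₁ m₁₂ m₁₃ m₁₄ m₁₅ m₂₂ m₂₃ m₂₄ m₃₃ * J5 =
      J5 * bisymmetricFive m₁₁ m₁₂ m₁₃ m₁₄ m₁₅ m₂₂ m₂₃ m₂₄ m₃₃ := by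
  ext i j
  fin_cases i <;> fin_cases j <;> simp [bisymmetricFive, J5, mul_apply, Fin.sum_univ_five]

set_option maxRecDepth 10000 in
theorem charpoly_bisymmetricFive {R : Type*} [CommRing R]
    (m₁₁ m₁₂ m₁₃ m₁₄ m₁₅ m₂₂ m₂₃ m₂₄ m₃₃ : R) :
    (bisymmetricFive m₁₁ m₁₂ m₁₃ m₁₄ m₁₅ m₂₂ m₂₃ m₂₄ m₃₃).charpoly =
      (!![m₁₁ - m₁₅, m₁₂ - m₁₄; m₁₂ - m₁₄, m₂₂ - m₂₄]).charpoly *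
        (!![m₁₁ + m₁₅, m₁₂ + m₁₄, m₁₃;
            m₁₂ + m₁₄, m₂₂ + m₂₄, m₂₃;
            2 * m₁₃, 2 * m₂₃, m₃₃]).charpoly := by
  rw [charpoly, charpoly, charpoly, det_fin_two, det_fin_three, det_succ_row_zero,
    Fin.sum_univ_five]
  simp [bisymmetricFive, det_succ_row_zero, Fin.sum_univ_succ, submatrix_apply, Fin.succAbove,
    charmatrix_apply, diagonal_apply, map_ofNat]
  ring

theorem charpoly_fin_three {R : Type*} [CommRing R] (m₁₁ m₁₂ m₁₃ m₂₁ m₂₂ m₂₃ m₃₁ m₃₂ m₃₃ : R) :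
    (!![m₁₁, m₁₂, m₁₃; m₂₁, m₂₂, m₂₃; m₃₁, m₃₂, m₃₃]).charpoly =
      X ^ 3 - C (m₁₁ + m₂₂ + m₃₃) * X ^ 2 +
        C (m₁₁ * m₂₂ - m₁₂ * m₂₁ + m₁₁ * m₃₃ - m₁₃ * m₃₁ + m₂₂ * m₃₃ - m₂₃ * m₃₂) * X -
        C (m₁₁ * m₂₂ * m₃₃ - m₁₁ * m₂₃ * m₃₂ - m₁₂ * m₂₁ * m₃₃ + m₁₂ * m₂₃ * m₃₁ +
          m₁₃ * m₂₁ * m₃₂ - m₁₃ * m₂₂ * m₃₁) := by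
  simp [charpoly, det_fin_three]
  ring

noncomputable def paramA (l1 l2 l3 l4 l5 : ℝ) : ℝ :=
  (1 / 2) * √((l1 + l5) * (l2 + l5) * (l3 + l4) / (l1 + l2 - l3 + l5))

noncomputable def paramB (l1 l2 l3 l4 l5 : ℝ) : ℝ :=
  √(-((l1 + l5) * (l2 + l5) * (l1 + l2 + l4 + l5)) / (2 * (l1 + l2 - l3 + l5)))

noncomputable def paramC (l1 l2 l3 l4 l5 : ℝ) : ℝ :=
  √(-((l3 + l4) * (l1 + l2 + l4 + l5)) / 2)

section Parameters

variable {l1 l2 l3 l4 l5 : ℝ}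

theorem radicandA_nonneg (h15 : 0 ≤ l1 + l5) (h25 : l2 + l5 ≤ 0) (h34 : l3 + l4 ≤ 0)
    (hD : 0 < l1 + l2 - l3 + l5) :
    0 ≤ (l1 + l5) * (l2 + l5) * (l3 + l4) / (l1 + l2 - l3 + l5) :=
  div_nonneg (mul_nonneg_of_nonpos_of_nonpos (mul_nonpos_of_nonneg_of_nonpos h15 h25) h34) hD.le

theorem radicandB_nonneg (h15 : 0 ≤ l1 + l5) (h25 : l2 + l5 ≤ 0) (hD : 0 < l1 + l2 - l3 + l5)
    (hE : 0 ≤ l1 + l2 + l4 + l5) :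
    0 ≤ -((l1 + l5) * (l2 + l5) * (l1 + l2 + l4 + l5)) / (2 * (l1 + l2 - l3 + l5)) :=
  div_nonneg (neg_nonneg.mpr (mul_nonpos_of_nonpos_of_nonneg
    (mul_nonpos_of_nonneg_of_nonpos h15 h25) hE)) (by positivity)

theorem radicandC_nonneg (h34 : l3 + l4 ≤ 0) (hE : 0 ≤ l1 + l2 + l4 + l5) :
    0 ≤ -((l3 + l4) * (l1 + l2 + l4 + l5)) / 2 :=
  div_nonneg (neg_nonneg.mpr (mul_nonpos_of_nonpos_of_nonneg h34 hE)) zero_le_two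

theorem paramA_nonneg : 0 ≤ paramA l1 l2 l3 l4 l5 := by
  rw [paramA]
  positivity

theorem four_mul_sq_paramA (h15 : 0 ≤ l1 + l5) (h25 : l2 + l5 ≤ 0) (h34 : l3 + l4 ≤ 0)
    (hD : 0 < l1 + l2 - l3 + l5) :
    4 * (l1 + l2 - l3 + l5) * paramA l1 l2 l3 l4 l5 ^ 2 = (l1 + l5) * (l2 + l5) * (l3 + l4) := by
  rw [paramA, mul_pow, Real.sq_sqrt (radicandA_nonneg h15 h25 h34 hD)]
  field_simp
  ring

theorem two_mul_sq_paramB (h15 : 0 ≤ l1 + l5) (h25 : l2 + l5 ≤ 0) (hD : 0 < l1 + l2 - l3 + l5)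
    (hE : 0 ≤ l1 + l2 + l4 + l5) :
    2 * (l1 + l2 - l3 + l5) * paramB l1 l2 l3 l4 l5 ^ 2 =
      -((l1 + l5) * (l2 + l5) * (l1 + l2 + l4 + l5)) := by
  rw [paramB, Real.sq_sqrt (radicandB_nonneg h15 h25 hD hE)]
  field_simp

theorem two_mul_sq_paramC (h34 : l3 + l4 ≤ 0) (hE : 0 ≤ l1 + l2 + l4 + l5) :
    2 * paramC l1 l2 l3 l4 l5 ^ 2 = -((l3 + l4) * (l1 + l2 + l4 + l5)) := by
  rw [paramC, Real.sq_sqrt (radicandC_nonneg h34 hE)]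
  ring

theorem four_mul_paramA_mul_paramB_mul_paramC (h15 : 0 ≤ l1 + l5) (h25 : l2 + l5 ≤ 0)
    (h34 : l3 + l4 ≤ 0) (hD : 0 < l1 + l2 - l3 + l5) (hE : 0 ≤ l1 + l2 + l4 + l5) :
    4 * (l1 + l2 - l3 + l5) *
        (paramA l1 l2 l3 l4 l5 * paramB l1 l2 l3 l4 l5 * paramC l1 l2 l3 l4 l5) =
      (l1 + l5) * (l2 + l5) * (l3 + l4) * (l1 + l2 + l4 + l5) := by
  have hA := four_mul_sq_paramA h15 h25 h34 hD
  have hB := two_mul_sq_paramB h15 h25 hD hE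
  have hC := two_mul_sq_paramC (l1 := l1) (l2 := l2) (l5 := l5) h34 hE
  have hP : 0 ≤ (l1 + l5) * (l2 + l5) * (l3 + l4) :=
    mul_nonneg_of_nonpos_of_nonpos (mul_nonpos_of_nonneg_of_nonpos h15 h25) h34
  have ha : 0 ≤ paramA l1 l2 l3 l4 l5 := paramA_nonneg
  have hb : 0 ≤ paramB l1 l2 l3 l4 l5 := Real.sqrt_nonneg _
  have hc : 0 ≤ paramC l1 l2 l3 l4 l5 := Real.sqrt_nonneg _
  set a := paramA l1 l2 l3 l4 l5
  set b := paramB l1 l2 l3 l4 l5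
  set c := paramC l1 l2 l3 l4 l5
  refine (pow_left_inj₀ (by positivity) (mul_nonneg hP hE) two_ne_zero).mp ?_
  linear_combination (2 * (l1 + l2 - l3 + l5) * b ^ 2) * (2 * c ^ 2) * hA +
    (l1 + l5) * (l2 + l5) * (l3 + l4) * (2 * c ^ 2) * hB +
    (l1 + l5) * (l2 + l5) * (l3 + l4) * (-((l1 + l5) * (l2 + l5) * (l1 + l2 + l4 + l5))) * hC

theorem charpoly_symmetricBlock {a b c : ℝ} (hD : l1 + l2 - l3 + l5 ≠ 0)
    (ha : 4 * (l1 + l2 - l3 + l5) * a ^ 2 = (l1 + l5) * (l2 + l5) * (l3 + l4))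
    (hb : 2 * (l1 + l2 - l3 + l5) * b ^ 2 = -((l1 + l5) * (l2 + l5) * (l1 + l2 + l4 + l5)))
    (hc : 2 * c ^ 2 = -((l3 + l4) * (l1 + l2 + l4 + l5)))
    (habc : 4 * (l1 + l2 - l3 + l5) * (a * b * c) =
      (l1 + l5) * (l2 + l5) * (l3 + l4) * (l1 + l2 + l4 + l5)) :
    (!![-l5, 2 * a, b; 2 * a, -l4, c; 2 * b, 2 * c, l1 + l2 + l3 + l4 + l5]).charpoly =
      (X - C l1) * (X - C l2) * (X - C l3) := by
  have hminors : -l5 * -l4 - 2 * a * (2 * a) + -l5 * (l1 + l2 + l3 + l4 + l5) - b * (2 * b) +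
      -l4 * (l1 + l2 + l3 + l4 + l5) - c * (2 * c) = l1 * l2 + l1 * l3 + l2 * l3 := by
    apply mul_left_cancel₀ hD
    linear_combination (-1) * ha - hb - (l1 + l2 - l3 + l5) * hc
  have hdet : -l5 * -l4 * (l1 + l2 + l3 + l4 + l5) - -l5 * c * (2 * c) -
      2 * a * (2 * a) * (l1 + l2 + l3 + l4 + l5) + 2 * a * c * (2 * b) + b * (2 * a) * (2 * c) -
      b * -l4 * (2 * b) = l1 * l2 * l3 := by
    apply mul_left_cancel₀ hD
    linear_combination (-(l1 + l2 + l3 + l4 + l5)) * ha + l4 * hb +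
      (l1 + l2 - l3 + l5) * l5 * hc + 2 * habc
  rw [charpoly_fin_three, hminors, hdet]
  simp only [map_add, map_mul, map_neg]
  ring

end Parameters

theorem stmt_6_general (l1 l2 l3 l4 l5 : ℝ)
    (h2 : 0 > l2) (h23 : l2 ≥ l3) (h34 : l3 ≥ l4) (h45 : l4 ≥ l5)
    (h5 : l5 ≥ -l1)
    (hsum : l1 + l2 + l3 + l4 + l5 ≥ 0) :
    0 < l1 + l2 - l3 + l5 ∧
    0 ≤ (l1 + l5) * (l2 + l5) * (l3 + l4) / (l1 + l2 - l3 + l5) ∧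
    0 ≤ -((l1 + l5) * (l2 + l5) * (l1 + l2 + l4 + l5)) / (2 * (l1 + l2 - l3 + l5)) ∧
    0 ≤ -((l3 + l4) * (l1 + l2 + l4 + l5)) / 2 ∧
    let a : ℝ := (1 / 2) * Real.sqrt ((l1 + l5) * (l2 + l5) * (l3 + l4) / (l1 + l2 - l3 + l5))
    let b : ℝ := Real.sqrt (-((l1 + l5) * (l2 + l5) * (l1 + l2 + l4 + l5)) / (2 * (l1 + l2 - l3 + l5)))
    let c : ℝ := Real.sqrt (-((l3 + l4) * (l1 + l2 + l4 + l5)) / 2)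
    let L2 : Matrix (Fin 5) (Fin 5) ℝ :=
      !![0, a, b, a, -l5;
         a, 0, c, -l4, a;
         b, c, l1 + l2 + l3 + l4 + l5, c, b;
         a, -l4, c, 0, a;
         -l5, a, b, a, 0]
    (∀ i j, 0 ≤ L2 i j) ∧ L2 = L2ᵀ ∧ L2 * J5 = J5 * L2 ∧
      L2.charpoly = (X - C l1) * (X - C l2) * (X - C l3) * (X - C l4) * (X - C l5) := by
  have hl15 : 0 ≤ l1 + l5 := neg_le_iff_add_nonneg'.mp h5
  have hl25 : l2 + l5 ≤ 0 := by linarith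
  have hl34 : l3 + l4 ≤ 0 := by linarith
  have hD : 0 < l1 + l2 - l3 + l5 := by linarith
  have hE : 0 ≤ l1 + l2 + l4 + l5 := by linarith
  refine ⟨hD, radicandA_nonneg hl15 hl25 hl34 hD, radicandB_nonneg hl15 hl25 hD hE,
    radicandC_nonneg hl34 hE, ?_⟩
  intro a b c L2
  have hL2 : L2 = bisymmetricFive 0 a b a (-l5) 0 c (-l4) (l1 + l2 + l3 + l4 + l5) := rfl
  rw [hL2]
  refine ⟨bisymmetricFive_nonneg _ _ _ _ _ _ _ _ _ le_rfl paramA_nonneg (Real.sqrt_nonneg _)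
      paramA_nonneg (by linarith) le_rfl (Real.sqrt_nonneg _) (by linarith) hsum,
    (transpose_bisymmetricFive _ _ _ _ _ _ _ _ _).symm, bisymmetricFive_mul_J5 _ _ _ _ _ _ _ _ _,
    ?_⟩
  have hsym := charpoly_symmetricBlock (a := a) (b := b) (c := c) hD.ne'
    (four_mul_sq_paramA hl15 hl25 hl34 hD) (two_mul_sq_paramB hl15 hl25 hD hE)
    (two_mul_sq_paramC hl34 hE) (four_mul_paramA_mul_paramB_mul_paramC hl15 hl25 hl34 hD hE)
  rw [charpoly_bisymmetricFive]
  simp only [zero_add, zero_sub, neg_neg, sub_self, ← two_mul, hsym]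
  rw [show !![l5, 0; 0, l4] = diagonal ![l5, l4] from (diagonal_fin_two ![l5, l4]).symm,
    charpoly_diagonal, Fin.prod_univ_two]
  simp only [cons_val_zero, cons_val_one]
  ring

theorem stmt_6 (l1 l2 l3 l4 l5 : ℝ)
    (h1 : l1 ≥ 0) (h2 : 0 > l2) (h23 : l2 ≥ l3) (h34 : l3 ≥ l4) (h45 : l4 ≥ l5)
    (h5 : l5 ≥ -l1)
    (hsum : l1 + l2 + l3 + l4 + l5 ≥ 0) :
    0 < l1 + l2 - l3 + l5 ∧
    0 ≤ (l1 + l5) * (l2 + l5) * (l3 + l4) / (l1 + l2 - l3 + l5) ∧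
    0 ≤ -((l1 + l5) * (l2 + l5) * (l1 + l2 + l4 + l5)) / (2 * (l1 + l2 - l3 + l5)) ∧
    0 ≤ -((l3 + l4) * (l1 + l2 + l4 + l5)) / 2 ∧
    let a : ℝ := (1 / 2) * Real.sqrt ((l1 + l5) * (l2 + l5) * (l3 + l4) / (l1 + l2 - l3 + l5))
    let b : ℝ := Real.sqrt (-((l1 + l5) * (l2 + l5) * (l1 + l2 + l4 + l5)) / (2 * (l1 + l2 - l3 + l5)))
    let c : ℝ := Real.sqrt (-((l3 + l4) * (l1 + l2 + l4 + l5)) / 2)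
    let L2 : Matrix (Fin 5) (Fin 5) ℝ :=
      !![0, a, b, a, -l5;
         a, 0, c, -l4, a;
         b, c, l1 + l2 + l3 + l4 + l5, c, b;
         a, -l4, c, 0, a;
         -l5, a, b, a, 0]
    (∀ i j, 0 ≤ L2 i j) ∧ L2 = L2ᵀ ∧ L2 * J5 = J5 * L2 ∧
      L2.charpoly = (X - C l1) * (X - C l2) * (X - C l3) * (X - C l4) * (X - C l5) :=
  stmt_6_general l1 l2 l3 l4 l5 h2 h23 h34 h45 h5 hsum
end

section
/- Let λ1 ≥ λ2 ≥ 0 > λ3 ≥ λ4 ≥ λ5 ≥ −λ1 be real numbers with s := λ1 + λ2 + λ3 + λ4 + λ5 ≥ 0, λ1 + λ3 + λ4 ≥ 0 and λ2 + λ5 < 0. Set a = (1/2)·√((λ1+λ5)(λ2+λ5)(λ3+λ4)/(λ1+λ2−λ3+λ5)), b = √(−(λ1+λ5)(λ2+λ5)(λ1+λ2+λ4+λ5)/(2(λ1+λ2−λ3+λ5))), and c = √(−(λ3+λ4)(λ1+λ2+λ4+λ5)/2). Then λ1+λ2−λ3+λ5 > 0, each quantity under a square root is nonnegative, and the 5×5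 matrix L2 with rows (0, a, b, a, −λ5), (a, 0, c, −λ4, a), (b, c, s, c, b), (a, −λ4, c, 0, a), (−λ5, a, b, a, 0) is nonnegative and bisymmetric, and its spectrum is λ1, λ2, λ3, λ4, λ5. -/
/-!
A bisymmetric 5×5 matrix maps `J`-symmetric vectors to `J`-symmetric ones and `J`-antisymmetric
vectors to `J`-antisymmetric ones, so its characteristic polynomial is that of a 3×3 block times
that of a 2×2 block. For `L2` the 2×2 block is `diag(λ4, λ5)`, and `a`, `b`, `c` are exactly what
makes the coefficients of the 3×3 block's characteristic polynomial those of
`(X - λ1)(X - λ2)(X - λ3)`. The remaining claims are sign bookkeeping.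
-/

open Matrix Polynomial

section Bisymmetric

variable {R : Type*}

def bisymmetricFin5 (p q r t a d b c s : R) : Matrix (Fin 5) (Fin 5) R :=
  !![p, a, b, d, q; a, r, c, t, d; b, c, s, c, b; d, t, c, r, a; q, d, b, a, p]

theorem bisymmetricFin5_transpose (p q r t a d b c s : R) :
    (bisymmetricFin5 p q r t a d b c s)ᵀ = bisymmetricFin5 p q r t a d b c s := by
  ext i j; fin_cases i <;> fin_cases j <;> rfl

theorem bisymmetricFin5_mul_J5 (p q r t a d b c s : ℝ) :
    bisymmetricFin5 p q r t a d b c s * J5 = J5 * bisymmetricFin5 p q r t a d b c s := by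
  ext i j; fin_cases i <;> fin_cases j <;>
    simp [bisymmetricFin5, J5, mul_apply, Fin.sum_univ_five]

theorem bisymmetricFin5_nonneg [Zero R] [LE R] {p q r t a d b c s : R}
    (hp : 0 ≤ p) (hq : 0 ≤ q) (hr : 0 ≤ r) (ht : 0 ≤ t) (ha : 0 ≤ a) (hd : 0 ≤ d) (hb : 0 ≤ b)
    (hc : 0 ≤ c) (hs : 0 ≤ s) (i j : Fin 5) : 0 ≤ bisymmetricFin5 p q r t a d b c s i j := by
  fin_cases i <;> fin_cases j <;> assumption

/- In the basis `e₀ + e₄, e₁ + e₃, e₂, e₃, e₄` (change of basis `P` with inverse `Q`) the matrix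
is block upper triangular; working with `e₃, e₄` instead of `e₁ - e₃, e₀ - e₄` keeps `P`
unimodular, so no `2` has to be inverted. -/
theorem charpoly_bisymmetricFin5 [CommRing R] (p q r t a d b c s : R) :
    (bisymmetricFin5 p q r t a d b c s).charpoly =
      (!![p + q, a + d, b; a + d, r + t, c; 2 * b, 2 * c, s]).charpoly *
        (!![r - t, a - d; a - d, p - q]).charpoly := by
  set P : Matrix (Fin 5) (Fin 5) R :=
    !![1, 0, 0, 0, 0; 0, 1, 0, 0, 0; 0, 0, 1, 0, 0; 0, 1, 0, 1, 0; 1, 0, 0, 0, 1]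
  set Q : Matrix (Fin 5) (Fin 5) R :=
    !![1, 0, 0, 0, 0; 0, 1, 0, 0, 0; 0, 0, 1, 0, 0; 0, -1, 0, 1, 0; -1, 0, 0, 0, 1]
  set B : Matrix (Fin 5) (Fin 5) R :=
    !![p + q, a + d, b, d, q; a + d, r + t, c, t, d; 2 * b, 2 * c, s, c, b;
      0, 0, 0, r - t, a - d; 0, 0, 0, a - d, p - q]
  have hQP : Q * P = 1 := by
    ext i j; fin_cases i <;> fin_cases j <;> simp [P, Q, mul_apply, Fin.sum_univ_five]
  have hconj : bisymmetricFin5 p q r t a d b c s = P * B * Q := by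
    ext i j; fin_cases i <;> fin_cases j <;>
      simp [bisymmetricFin5, P, Q, B, mul_apply, Fin.sum_univ_five] <;> ring
  have hblocks : B = reindex finSumFinEquiv finSumFinEquiv
      (fromBlocks !![p + q, a + d, b; a + d, r + t, c; 2 * b, 2 * c, s] !![d, q; t, d; c, b] 0
        !![r - t, a - d; a - d, p - q]) := by
    ext i j; fin_cases i <;> fin_cases j <;> rfl
  rw [hconj, charpoly_mul_comm, ← Matrix.mul_assoc, hQP, Matrix.one_mul, hblocks,
    charpoly_reindex, charpoly_fromBlocks_zero₂₁]

theorem charpoly_diagonal_fin_two [CommRing R] (x y : R) :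
    (!![x, 0; 0, y]).charpoly = (X - C x) * (X - C y) := by
  rw [← diagonal_vec2, charpoly_diagonal, Fin.prod_univ_two]
  rfl

end Bisymmetric

theorem charpoly_symmetric_block {K : Type*} [Field K] {l1 l2 l3 l4 l5 a b c : K}
    (hD : l1 + l2 - l3 + l5 ≠ 0)
    (ha : 4 * (l1 + l2 - l3 + l5) * a ^ 2 = (l1 + l5) * (l2 + l5) * (l3 + l4))
    (hb : 2 * (l1 + l2 - l3 + l5) * b ^ 2 = -((l1 + l5) * (l2 + l5) * (l1 + l2 + l4 + l5)))
    (hc : 2 * c ^ 2 = -((l3 + l4) * (l1 + l2 + l4 + l5)))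
    (habc : 4 * (l1 + l2 - l3 + l5) * (a * b * c) =
      (l1 + l5) * (l2 + l5) * (l3 + l4) * (l1 + l2 + l4 + l5)) :
    (!![-l5, 2 * a, b; 2 * a, -l4, c; 2 * b, 2 * c, l1 + l2 + l3 + l4 + l5]).charpoly =
      (X - C l1) * (X - C l2) * (X - C l3) := by
  refine mul_left_cancel₀ (C_ne_zero.2 hD) ?_
  rw [charpoly, det_fin_three]
  simp only [charmatrix_apply, of_apply, cons_val', cons_val_zero, cons_val_one, cons_val_two,
    head_cons, tail_cons, empty_val', cons_val_fin_one, head_fin_const, diagonal_apply_eq,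
    diagonal_apply_ne, ne_eq, Fin.reduceEq, not_false_eq_true]
  have ha' := congrArg C ha
  have hb' := congrArg C hb
  have hc' := congrArg C hc
  have habc' := congrArg C habc
  simp only [map_mul, map_pow, map_add, map_sub, map_neg, map_ofNat] at ha' hb' hc' habc' ⊢
  linear_combination (C l1 + C l2 + C l3 + C l4 + C l5 - X) * ha' - (X + C l4) * hb' -
    (C l1 + C l2 - C l3 + C l5) * (X + C l5) * hc' - 2 * habc'

theorem radicands_nonneg {l1 l2 l3 l4 l5 : ℝ} (h15 : 0 ≤ l1 + l5) (h25 : l2 + l5 ≤ 0)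
    (h34 : l3 + l4 ≤ 0) (hE : 0 ≤ l1 + l2 + l4 + l5) (hD : 0 < l1 + l2 - l3 + l5) :
    0 ≤ (l1 + l5) * (l2 + l5) * (l3 + l4) / (l1 + l2 - l3 + l5) ∧
    0 ≤ -((l1 + l5) * (l2 + l5) * (l1 + l2 + l4 + l5)) / (2 * (l1 + l2 - l3 + l5)) ∧
    0 ≤ -((l3 + l4) * (l1 + l2 + l4 + l5)) / 2 := by
  have h125 : (l1 + l5) * (l2 + l5) ≤ 0 := mul_nonpos_of_nonneg_of_nonpos h15 h25
  refine ⟨div_nonneg (mul_nonneg_of_nonpos_of_nonpos h125 h34) hD.le, ?_, ?_⟩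
  · exact div_nonneg (neg_nonneg.2 (mul_nonpos_of_nonpos_of_nonneg h125 hE)) (by linarith)
  · exact div_nonneg (neg_nonneg.2 (mul_nonpos_of_nonpos_of_nonneg h34 hE)) zero_le_two

/- The square relations determine `a * b * c` only up to sign; the product relation holds because
`a, b, c ≥ 0` and its right-hand side is nonnegative. -/
theorem sqrt_relations {l1 l2 l3 l4 l5 : ℝ} (h15 : 0 ≤ l1 + l5) (h25 : l2 + l5 ≤ 0)
    (h34 : l3 + l4 ≤ 0) (hE : 0 ≤ l1 + l2 + l4 + l5) (hD : 0 < l1 + l2 - l3 + l5) :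
    let a : ℝ := (1 / 2) * Real.sqrt ((l1 + l5) * (l2 + l5) * (l3 + l4) / (l1 + l2 - l3 + l5))
    let b : ℝ := Real.sqrt (-((l1 + l5) * (l2 + l5) * (l1 + l2 + l4 + l5)) / (2 * (l1 + l2 - l3 + l5)))
    let c : ℝ := Real.sqrt (-((l3 + l4) * (l1 + l2 + l4 + l5)) / 2)
    4 * (l1 + l2 - l3 + l5) * a ^ 2 = (l1 + l5) * (l2 + l5) * (l3 + l4) ∧
    2 * (l1 + l2 - l3 + l5) * b ^ 2 = -((l1 + l5) * (l2 + l5) * (l1 + l2 + l4 + l5)) ∧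
    2 * c ^ 2 = -((l3 + l4) * (l1 + l2 + l4 + l5)) ∧
    4 * (l1 + l2 - l3 + l5) * (a * b * c) =
      (l1 + l5) * (l2 + l5) * (l3 + l4) * (l1 + l2 + l4 + l5) := by
  intro a b c
  obtain ⟨hqa, hqb, hqc⟩ := radicands_nonneg h15 h25 h34 hE hD
  have ha : 4 * (l1 + l2 - l3 + l5) * a ^ 2 = (l1 + l5) * (l2 + l5) * (l3 + l4) := by
    simp only [a, mul_pow, Real.sq_sqrt hqa]; field_simp; ring
  have hb : 2 * (l1 + l2 - l3 + l5) * b ^ 2 = -((l1 + l5) * (l2 + l5) * (l1 + l2 + l4 + l5)) := by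
    simp only [b, Real.sq_sqrt hqb]; field_simp
  have hc : 2 * c ^ 2 = -((l3 + l4) * (l1 + l2 + l4 + l5)) := by
    simp only [c, Real.sq_sqrt hqc]; ring
  refine ⟨ha, hb, hc, (pow_left_inj₀ ?_ ?_ two_ne_zero).1 ?_⟩
  · exact mul_nonneg (by linarith) (by positivity)
  · exact mul_nonneg (mul_nonneg_of_nonpos_of_nonpos (mul_nonpos_of_nonneg_of_nonpos h15 h25) h34) hE
  · calc (4 * (l1 + l2 - l3 + l5) * (a * b * c)) ^ 2
        = 4 * (l1 + l2 - l3 + l5) * a ^ 2 * (2 * (l1 + l2 - l3 + l5) * b ^ 2) * (2 * c ^ 2) := by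
          ring
      _ = _ := by rw [ha, hb, hc]; ring

theorem stmt_7_general (l1 l2 l3 l4 l5 : ℝ)
    (h2 : l2 ≥ 0) (h3 : 0 > l3) (h34 : l3 ≥ l4)
    (h5 : l5 ≥ -l1)
    (hsum : l1 + l2 + l3 + l4 + l5 ≥ 0)
    (h25 : l2 + l5 < 0) :
    0 < l1 + l2 - l3 + l5 ∧
    0 ≤ (l1 + l5) * (l2 + l5) * (l3 + l4) / (l1 + l2 - l3 + l5) ∧
    0 ≤ -((l1 + l5) * (l2 + l5) * (l1 + l2 + l4 + l5)) / (2 * (l1 + l2 - l3 + l5)) ∧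
    0 ≤ -((l3 + l4) * (l1 + l2 + l4 + l5)) / 2 ∧
    let a : ℝ := (1 / 2) * Real.sqrt ((l1 + l5) * (l2 + l5) * (l3 + l4) / (l1 + l2 - l3 + l5))
    let b : ℝ := Real.sqrt (-((l1 + l5) * (l2 + l5) * (l1 + l2 + l4 + l5)) / (2 * (l1 + l2 - l3 + l5)))
    let c : ℝ := Real.sqrt (-((l3 + l4) * (l1 + l2 + l4 + l5)) / 2)
    let L2 : Matrix (Fin 5) (Fin 5) ℝ :=
      !![0, a, b, a, -l5;
         a, 0, c, -l4, a;
         b, c, l1 + l2 + l3 + l4 + l5, c, b;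
         a, -l4, c, 0, a;
         -l5, a, b, a, 0]
    (∀ i j, 0 ≤ L2 i j) ∧ L2 = L2ᵀ ∧ L2 * J5 = J5 * L2 ∧
      L2.charpoly = (X - C l1) * (X - C l2) * (X - C l3) * (X - C l4) * (X - C l5) := by
  have h15 : 0 ≤ l1 + l5 := by linarith
  have h34' : l3 + l4 ≤ 0 := by linarith
  have hE : 0 < l1 + l2 + l4 + l5 := by linarith
  have hD : 0 < l1 + l2 - l3 + l5 := by linarith
  obtain ⟨hqa, hqb, hqc⟩ := radicands_nonneg h15 h25.le h34' hE.le hD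
  refine ⟨hD, hqa, hqb, hqc, ?_⟩
  intro a b c L2
  obtain ⟨ha, hb, hc, habc⟩ := sqrt_relations h15 h25.le h34' hE.le hD
  have hL2 : L2 = bisymmetricFin5 0 (-l5) 0 (-l4) a a b c (l1 + l2 + l3 + l4 + l5) := rfl
  refine ⟨?_, ?_, ?_, ?_⟩
  · rw [hL2]
    exact bisymmetricFin5_nonneg le_rfl (by linarith) le_rfl (by linarith) (by positivity)
      (by positivity) (Real.sqrt_nonneg _) (Real.sqrt_nonneg _) hsum
  · rw [hL2, bisymmetricFin5_transpose]
  · exact bisymmetricFin5_mul_J5 _ _ _ _ _ _ _ _ _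
  · rw [hL2, charpoly_bisymmetricFin5]
    simp only [zero_add, zero_sub, neg_neg, ← two_mul, sub_self]
    rw [charpoly_symmetric_block hD.ne' ha hb hc habc, charpoly_diagonal_fin_two]
    ring

theorem stmt_7 (l1 l2 l3 l4 l5 : ℝ)
    (h12 : l1 ≥ l2) (h2 : l2 ≥ 0) (h3 : 0 > l3) (h34 : l3 ≥ l4) (h45 : l4 ≥ l5)
    (h5 : l5 ≥ -l1)
    (hsum : l1 + l2 + l3 + l4 + l5 ≥ 0)
    (h134 : l1 + l3 + l4 ≥ 0) (h25 : l2 + l5 < 0) :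
    0 < l1 + l2 - l3 + l5 ∧
    0 ≤ (l1 + l5) * (l2 + l5) * (l3 + l4) / (l1 + l2 - l3 + l5) ∧
    0 ≤ -((l1 + l5) * (l2 + l5) * (l1 + l2 + l4 + l5)) / (2 * (l1 + l2 - l3 + l5)) ∧
    0 ≤ -((l3 + l4) * (l1 + l2 + l4 + l5)) / 2 ∧
    let a : ℝ := (1 / 2) * Real.sqrt ((l1 + l5) * (l2 + l5) * (l3 + l4) / (l1 + l2 - l3 + l5))
    let b : ℝ := Real.sqrt (-((l1 + l5) * (l2 + l5) * (l1 + l2 + l4 + l5)) / (2 * (l1 + l2 - l3 + l5)))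
    let c : ℝ := Real.sqrt (-((l3 + l4) * (l1 + l2 + l4 + l5)) / 2)
    let L2 : Matrix (Fin 5) (Fin 5) ℝ :=
      !![0, a, b, a, -l5;
         a, 0, c, -l4, a;
         b, c, l1 + l2 + l3 + l4 + l5, c, b;
         a, -l4, c, 0, a;
         -l5, a, b, a, 0]
    (∀ i j, 0 ≤ L2 i j) ∧ L2 = L2ᵀ ∧ L2 * J5 = J5 * L2 ∧
      L2.charpoly = (X - C l1) * (X - C l2) * (X - C l3) * (X - C l4) * (X - C l5) :=
  stmt_7_general l1 l2 l3 l4 l5 h2 h3 h34 h5 hsum h25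
end

section
/- Let λ1 ≥ λ2 ≥ λ3 ≥ 0 > λ4 ≥ λ5 ≥ −λ1 be real numbers with λ1 + λ2 + λ4 + λ5 ≥ 0, λ2 + λ5 < 0 and λ3 + λ4 ≥ 0. Set g = √(−(λ2+λ5)(λ1+λ5)/2). Then the quantity under the square root is nonnegative, and the 5×5 matrix L4 with rows ((λ3+λ4)/2, 0, 0, 0, (λ3−λ4)/2), (0, 0, g, −λ5, 0), (0, g, λ1+λ2+λ5, g, 0), (0, −λ5, g, 0, 0), ((λ3−λ4)/2, 0, 0, 0, (λ3+λ4)/2) is nonnegative and bisymmetric, and its spectrum is λ1, λ2, λ3, λ4, λ5. -/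
/-!
`L4 = bisymmForm a b c d g` with `a ± b = λ₃, λ₄`, `c = -λ₅` and `d = λ₁ + λ₂ + λ₅`. It is
a direct sum of a block on `e₁, e₅`, with eigenvalues `a ± b`, and a block on `e₂, e₃, e₄`.
In the latter, `e₂ - e₄` is an eigenvector for `-c`, and on the span of `e₂ + e₄` and `e₃`
it acts by `[[c, g], [2g, d]]`, whose characteristic polynomial is
`X² - (c + d) X + (c d - 2 g²)`. The value of `g` is chosen so that this is
`(X - λ₁)(X - λ₂)`.
-/

open Matrix Polynomial

variable {R : Type*}

def bisymmForm [Zero R] (a b c d g : R) : Matrix (Fin 5) (Fin 5) R :=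
  !![a, 0, 0, 0, b;
     0, 0, g, c, 0;
     0, g, d, g, 0;
     0, c, g, 0, 0;
     b, 0, 0, 0, a]

theorem bisymmForm_transpose [Zero R] (a b c d g : R) :
    (bisymmForm a b c d g)ᵀ = bisymmForm a b c d g := by
  ext i j
  fin_cases i <;> fin_cases j <;> rfl

theorem bisymmForm_nonneg [Zero R] [Preorder R] {a b c d g : R}
    (ha : 0 ≤ a) (hb : 0 ≤ b) (hc : 0 ≤ c) (hd : 0 ≤ d) (hg : 0 ≤ g) (i j : Fin 5) :
    0 ≤ bisymmForm a b c d g i j := by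
  fin_cases i <;> fin_cases j <;> first | exact le_rfl | assumption

theorem bisymmForm_mul_J5 (a b c d g : ℝ) :
    bisymmForm a b c d g * J5 = J5 * bisymmForm a b c d g := by
  ext i j
  fin_cases i <;> fin_cases j <;> simp [bisymmForm, J5, mul_apply, Fin.sum_univ_five]

theorem charpoly_bisymmForm [CommRing R] (a b c d g : R) :
    (bisymmForm a b c d g).charpoly =
      (X - C (a + b)) * (X - C (a - b)) * (X + C c) *
        (X ^ 2 - C (c + d) * X + C (c * d - 2 * g ^ 2)) := by
  rw [charpoly, det_succ_row_zero]
  simp [bisymmForm, Fin.sum_univ_succ, det_succ_row_zero, Fin.succAbove, charmatrix_apply,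
    map_ofNat]
  ring

theorem stmt_10_general (l1 l2 l3 l4 l5 : ℝ)
    (h4 : 0 > l4) (h45 : l4 ≥ l5)
    (h5 : l5 ≥ -l1)
    (h1245 : l1 + l2 + l4 + l5 ≥ 0) (h25 : l2 + l5 < 0) (h34 : l3 + l4 ≥ 0) :
    0 ≤ -((l2 + l5) * (l1 + l5)) / 2 ∧
    let g : ℝ := Real.sqrt (-((l2 + l5) * (l1 + l5)) / 2)
    let L4 : Matrix (Fin 5) (Fin 5) ℝ :=
      !![(l3 + l4) / 2, 0, 0, 0, (l3 - l4) / 2;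
         0, 0, g, -l5, 0;
         0, g, l1 + l2 + l5, g, 0;
         0, -l5, g, 0, 0;
         (l3 - l4) / 2, 0, 0, 0, (l3 + l4) / 2]
    (∀ i j, 0 ≤ L4 i j) ∧ L4 = L4ᵀ ∧ L4 * J5 = J5 * L4 ∧
      L4.charpoly = (X - C l1) * (X - C l2) * (X - C l3) * (X - C l4) * (X - C l5) := by
  have hrad : 0 ≤ -((l2 + l5) * (l1 + l5)) / 2 :=
    div_nonneg (neg_nonneg.mpr (mul_nonpos_of_nonpos_of_nonneg h25.le (by linarith)))
      zero_le_two
  refine ⟨hrad, ?_⟩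
  intro g L4
  have hL4 : L4 = bisymmForm ((l3 + l4) / 2) ((l3 - l4) / 2) (-l5) (l1 + l2 + l5) g := rfl
  have hg : 2 * g ^ 2 = -((l2 + l5) * (l1 + l5)) := by
    rw [Real.sq_sqrt hrad]
    ring
  rw [hL4, charpoly_bisymmForm, bisymmForm_transpose]
  refine ⟨bisymmForm_nonneg (by linarith) (by linarith) (by linarith) (by linarith)
    (Real.sqrt_nonneg _), rfl, bisymmForm_mul_J5 .., ?_⟩
  rw [show (l3 + l4) / 2 + (l3 - l4) / 2 = l3 by ring,
    show (l3 + l4) / 2 - (l3 - l4) / 2 = l4 by ring,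
    show -l5 + (l1 + l2 + l5) = l1 + l2 by ring,
    show -l5 * (l1 + l2 + l5) - 2 * g ^ 2 = l1 * l2 by linear_combination -hg]
  simp only [map_add, map_mul, map_neg]
  ring

theorem stmt_10 (l1 l2 l3 l4 l5 : ℝ)
    (h12 : l1 ≥ l2) (h23 : l2 ≥ l3) (h3 : l3 ≥ 0) (h4 : 0 > l4) (h45 : l4 ≥ l5)
    (h5 : l5 ≥ -l1)
    (h1245 : l1 + l2 + l4 + l5 ≥ 0) (h25 : l2 + l5 < 0) (h34 : l3 + l4 ≥ 0) :
    0 ≤ -((l2 + l5) * (l1 + l5)) / 2 ∧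
    let g : ℝ := Real.sqrt (-((l2 + l5) * (l1 + l5)) / 2)
    let L4 : Matrix (Fin 5) (Fin 5) ℝ :=
      !![(l3 + l4) / 2, 0, 0, 0, (l3 - l4) / 2;
         0, 0, g, -l5, 0;
         0, g, l1 + l2 + l5, g, 0;
         0, -l5, g, 0, 0;
         (l3 - l4) / 2, 0, 0, 0, (l3 + l4) / 2]
    (∀ i j, 0 ≤ L4 i j) ∧ L4 = L4ᵀ ∧ L4 * J5 = J5 * L4 ∧
      L4.charpoly = (X - C l1) * (X - C l2) * (X - C l3) * (X - C l4) * (X - C l5) :=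
  stmt_10_general l1 l2 l3 l4 l5 h4 h45 h5 h1245 h25 h34
end

section
/- Let λ1 ≥ λ2 ≥ λ3 ≥ 0 > λ4 ≥ λ5 ≥ −λ1 be real numbers with s := λ1 + λ2 + λ3 + λ4 + λ5 ≥ 0, λ1 + λ2 + λ4 + λ5 ≥ 0, λ2 + λ5 < 0 and λ3 + λ4 < 0. Set a = (1/2)·√((λ1+λ5)(λ2+λ5)(λ3+λ4)/(λ1+λ2−λ3+λ5)), b = √(−(λ1+λ5)(λ2+λ5)(λ1+λ2+λ4+λ5)/(2(λ1+λ2−λ3+λ5))), and c = √(−(λ3+λ4)(λ1+λ2+λ4+λ5)/2). Then λ1+λ2−λ3+λ5 > 0, each quantity under a square root is nonnegative, and the 5×5 matrix L2 with rows (0, a, b, a, −λ5), (a, 0, c, −λ4, a), (b, c, s, c, b), (a, −λ4, c, 0, a), (−λ5, a, b, a, 0) is nonnegative and bisymmetric, and its spectrum is λ1, λ2, λ3, λ4, λ5. -/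
/-!
`L2` commutes with `J`, so it preserves the `±1`-eigenspaces of `J`: on the skew vectors
`(x, y, 0, -y, -x)` it acts as `diag(λ5, λ4)`, on the symmetric vectors `(x, y, z, y, x)` as a
3×3 matrix whose trace is `λ1 + λ2 + λ3`. The entries `a`, `b`, `c` enter the two remaining
coefficients of its characteristic polynomial only through `4a² + 2b² + 2c²` and `abc`, and are
chosen to make these coefficients the elementary symmetric functions of `λ1, λ2, λ3`.
-/

open Matrix Polynomial

def bisymPattern {R : Type*} [Zero R] (a b c u v s : R) : Matrix (Fin 5) (Fin 5) R :=
  !![0, a, b, a, u;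
     a, 0, c, v, a;
     b, c, s, c, b;
     a, v, c, 0, a;
     u, a, b, a, 0]

section BisymPattern

variable {R : Type*}

theorem bisymPattern_transpose [Zero R] (a b c u v s : R) :
    (bisymPattern a b c u v s)ᵀ = bisymPattern a b c u v s := by
  ext i j
  fin_cases i <;> fin_cases j <;> rfl

theorem bisymPattern_mul_J5 (a b c u v s : ℝ) :
    bisymPattern a b c u v s * J5 = J5 * bisymPattern a b c u v s := by
  ext i j
  fin_cases i <;> fin_cases j <;> simp [bisymPattern, J5, mul_apply, Fin.sum_univ_five]

theorem bisymPattern_nonneg [Zero R] [Preorder R] {a b c u v s : R} (ha : 0 ≤ a) (hb : 0 ≤ b)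
    (hc : 0 ≤ c) (hu : 0 ≤ u) (hv : 0 ≤ v) (hs : 0 ≤ s) (i j : Fin 5) :
    0 ≤ bisymPattern a b c u v s i j := by
  fin_cases i <;> fin_cases j <;> simp [bisymPattern, *]

/-- The cubic factor is the characteristic polynomial of `[[u, 2a, b], [2a, v, c], [2b, 2c, s]]`,
the action on the `J`-symmetric vectors. -/
theorem charpoly_bisymPattern [CommRing R] (a b c u v s : R) :
    (bisymPattern a b c u v s).charpoly =
      (X + C u) * (X + C v) *
        (X ^ 3 - C (u + v + s) * X ^ 2
          + C (u * v + u * s + v * s - 4 * a ^ 2 - 2 * b ^ 2 - 2 * c ^ 2) * X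
          - C (u * v * s - 2 * u * c ^ 2 - 2 * v * b ^ 2 - 4 * a ^ 2 * s + 8 * a * b * c)) := by
  rw [charpoly, det_succ_row_zero]
  simp only [bisymPattern, Nat.succ_eq_add_one, Nat.reduceAdd, Fin.isValue, charmatrix_apply,
    of_apply, cons_val', cons_val_fin_one, cons_val_zero, det_succ_row_zero, submatrix_apply,
    Fin.succ_zero_eq_one, Fin.succAbove, cons_val_one, submatrix_submatrix, Function.comp_apply,
    Fin.succ_one_eq_two, cons_val, Fin.reduceSucc, det_unique, Fin.default_eq_zero,
    Fin.castSucc_zero, Fin.sum_univ_succ, Fin.coe_ofNat_eq_mod, Nat.zero_mod, pow_zero, one_mul,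
    lt_self_iff_false, ↓reduceIte, Fin.castSucc_one, Finset.univ_unique, Fin.val_succ,
    Fin.val_eq_zero, zero_add, pow_one, Fin.castSucc_succ, neg_mul, neg_sub, Fin.succ_pos,
    Finset.sum_singleton, not_lt_zero, Fin.reduceCastSucc, even_two, Even.neg_pow, one_pow,
    Fin.reduceLT, Fin.lt_one_iff, Fin.reduceEq, diagonal_apply_eq, map_zero, sub_zero, ne_eq,
    not_false_eq_true, diagonal_apply_ne, zero_sub, mul_neg, neg_neg, X_mul_C, cons_val_succ,
    one_ne_zero, zero_ne_one, map_add, map_sub, map_mul, map_ofNat, map_pow]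
  ring

end BisymPattern

theorem cubic_eq_prod_of_vieta {R : Type*} [CommRing R] {t p d x y z : R}
    (ht : t = x + y + z) (hp : p = x * y + x * z + y * z) (hd : d = x * y * z) :
    X ^ 3 - C t * X ^ 2 + C p * X - C d = (X - C x) * (X - C y) * (X - C z) := by
  subst ht hp hd
  simp only [map_add, map_mul]
  ring

section Entries

variable {l1 l2 l3 l4 l5 a b c : ℝ} (hD : l1 + l2 - l3 + l5 ≠ 0)
  (ha : a ^ 2 = (l1 + l5) * (l2 + l5) * (l3 + l4) / (4 * (l1 + l2 - l3 + l5)))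
  (hb : b ^ 2 = -((l1 + l5) * (l2 + l5) * (l1 + l2 + l4 + l5)) / (2 * (l1 + l2 - l3 + l5)))
  (hc : c ^ 2 = -((l3 + l4) * (l1 + l2 + l4 + l5)) / 2)
include hD ha hb hc

theorem linear_coeff_eq :
    (-l5) * (-l4) + (-l5) * (l1 + l2 + l3 + l4 + l5) + (-l4) * (l1 + l2 + l3 + l4 + l5)
      - 4 * a ^ 2 - 2 * b ^ 2 - 2 * c ^ 2 = l1 * l2 + l1 * l3 + l2 * l3 := by
  rw [ha, hb, hc]
  field_simp
  ring

theorem constant_coeff_eq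
    (habc : a * b * c =
      (l1 + l5) * (l2 + l5) * (l3 + l4) * (l1 + l2 + l4 + l5) / (4 * (l1 + l2 - l3 + l5))) :
    (-l5) * (-l4) * (l1 + l2 + l3 + l4 + l5) - 2 * (-l5) * c ^ 2 - 2 * (-l4) * b ^ 2
      - 4 * a ^ 2 * (l1 + l2 + l3 + l4 + l5) + 8 * a * b * c = l1 * l2 * l3 := by
  rw [mul_assoc (8 : ℝ) a b, mul_assoc (8 : ℝ) (a * b) c, habc, ha, hb, hc]
  field_simp
  ring

end Entries

theorem stmt_11_general (l1 l2 l3 l4 l5 : ℝ)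
    (h4 : 0 > l4) (h45 : l4 ≥ l5)
    (h5 : l5 ≥ -l1)
    (hsum : l1 + l2 + l3 + l4 + l5 ≥ 0)
    (h1245 : l1 + l2 + l4 + l5 ≥ 0) (h25 : l2 + l5 < 0) (h34 : l3 + l4 < 0) :
    0 < l1 + l2 - l3 + l5 ∧
    0 ≤ (l1 + l5) * (l2 + l5) * (l3 + l4) / (l1 + l2 - l3 + l5) ∧
    0 ≤ -((l1 + l5) * (l2 + l5) * (l1 + l2 + l4 + l5)) / (2 * (l1 + l2 - l3 + l5)) ∧
    0 ≤ -((l3 + l4) * (l1 + l2 + l4 + l5)) / 2 ∧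
    let a : ℝ := (1 / 2) * Real.sqrt ((l1 + l5) * (l2 + l5) * (l3 + l4) / (l1 + l2 - l3 + l5))
    let b : ℝ := Real.sqrt (-((l1 + l5) * (l2 + l5) * (l1 + l2 + l4 + l5)) / (2 * (l1 + l2 - l3 + l5)))
    let c : ℝ := Real.sqrt (-((l3 + l4) * (l1 + l2 + l4 + l5)) / 2)
    let L2 : Matrix (Fin 5) (Fin 5) ℝ :=
      !![0, a, b, a, -l5;
         a, 0, c, -l4, a;
         b, c, l1 + l2 + l3 + l4 + l5, c, b;
         a, -l4, c, 0, a;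
         -l5, a, b, a, 0]
    (∀ i j, 0 ≤ L2 i j) ∧ L2 = L2ᵀ ∧ L2 * J5 = J5 * L2 ∧
      L2.charpoly = (X - C l1) * (X - C l2) * (X - C l3) * (X - C l4) * (X - C l5) := by
  have hD : 0 < l1 + l2 - l3 + l5 := by linarith
  have h15 : 0 ≤ l1 + l5 := by linarith
  have h15_25 : (l1 + l5) * (l2 + l5) ≤ 0 := mul_nonpos_of_nonneg_of_nonpos h15 h25.le
  have hP : 0 ≤ (l1 + l5) * (l2 + l5) * (l3 + l4) := mul_nonneg_of_nonpos_of_nonpos h15_25 h34.le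
  have ha0 := div_nonneg hP hD.le
  have hb0 : 0 ≤ -((l1 + l5) * (l2 + l5) * (l1 + l2 + l4 + l5)) / (2 * (l1 + l2 - l3 + l5)) :=
    div_nonneg (neg_nonneg.2 (mul_nonpos_of_nonpos_of_nonneg h15_25 h1245)) (by positivity)
  have hc0 : 0 ≤ -((l3 + l4) * (l1 + l2 + l4 + l5)) / 2 :=
    div_nonneg (neg_nonneg.2 (mul_nonpos_of_nonpos_of_nonneg h34.le h1245)) zero_le_two
  refine ⟨hD, ha0, hb0, hc0, ?_⟩
  intro a b c L2
  have hL2 : L2 = bisymPattern a b c (-l5) (-l4) (l1 + l2 + l3 + l4 + l5) := rfl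
  have ha : a ^ 2 = (l1 + l5) * (l2 + l5) * (l3 + l4) / (4 * (l1 + l2 - l3 + l5)) := by
    rw [mul_pow, Real.sq_sqrt ha0]
    field_simp
    ring
  have hb := Real.sq_sqrt hb0
  have hc := Real.sq_sqrt hc0
  have habc : a * b * c =
      (l1 + l5) * (l2 + l5) * (l3 + l4) * (l1 + l2 + l4 + l5) / (4 * (l1 + l2 - l3 + l5)) := by
    rw [← sq_eq_sq₀ (by positivity) (div_nonneg (mul_nonneg hP h1245) (by positivity)),
      mul_pow, mul_pow, ha, hb, hc]
    field_simp
    ring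
  rw [hL2]
  refine ⟨bisymPattern_nonneg (by positivity) (Real.sqrt_nonneg _) (Real.sqrt_nonneg _)
      (by linarith) (by linarith) hsum, (bisymPattern_transpose ..).symm,
    bisymPattern_mul_J5 .., ?_⟩
  rw [charpoly_bisymPattern, cubic_eq_prod_of_vieta (by ring) (linear_coeff_eq hD.ne' ha hb hc)
    (constant_coeff_eq hD.ne' ha hb hc habc)]
  simp only [map_neg]
  ring

theorem stmt_11 (l1 l2 l3 l4 l5 : ℝ)
    (h12 : l1 ≥ l2) (h23 : l2 ≥ l3) (h3 : l3 ≥ 0) (h4 : 0 > l4) (h45 : l4 ≥ l5)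
    (h5 : l5 ≥ -l1)
    (hsum : l1 + l2 + l3 + l4 + l5 ≥ 0)
    (h1245 : l1 + l2 + l4 + l5 ≥ 0) (h25 : l2 + l5 < 0) (h34 : l3 + l4 < 0) :
    0 < l1 + l2 - l3 + l5 ∧
    0 ≤ (l1 + l5) * (l2 + l5) * (l3 + l4) / (l1 + l2 - l3 + l5) ∧
    0 ≤ -((l1 + l5) * (l2 + l5) * (l1 + l2 + l4 + l5)) / (2 * (l1 + l2 - l3 + l5)) ∧
    0 ≤ -((l3 + l4) * (l1 + l2 + l4 + l5)) / 2 ∧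
    let a : ℝ := (1 / 2) * Real.sqrt ((l1 + l5) * (l2 + l5) * (l3 + l4) / (l1 + l2 - l3 + l5))
    let b : ℝ := Real.sqrt (-((l1 + l5) * (l2 + l5) * (l1 + l2 + l4 + l5)) / (2 * (l1 + l2 - l3 + l5)))
    let c : ℝ := Real.sqrt (-((l3 + l4) * (l1 + l2 + l4 + l5)) / 2)
    let L2 : Matrix (Fin 5) (Fin 5) ℝ :=
      !![0, a, b, a, -l5;
         a, 0, c, -l4, a;
         b, c, l1 + l2 + l3 + l4 + l5, c, b;
         a, -l4, c, 0, a;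
         -l5, a, b, a, 0]
    (∀ i j, 0 ≤ L2 i j) ∧ L2 = L2ᵀ ∧ L2 * J5 = J5 * L2 ∧
      L2.charpoly = (X - C l1) * (X - C l2) * (X - C l3) * (X - C l4) * (X - C l5) :=
  stmt_11_general l1 l2 l3 l4 l5 h4 h45 h5 hsum h1245 h25 h34
end

section
/- Let 1 ≥ λ2 ≥ λ3 > 0 > λ4 ≥ λ5 ≥ −1 be real numbers such that 1 + λ2 + λ3 + λ4 + λ5 > 0 and 1 + λ2 + λ4 + λ5 < 0. If λ2·λ4 − λ3·λ5 − λ3 − λ5 ≥ −λ3·λ5/(1 + λ3 + λ5), then there exists a 5×5 nonnegative bisymmetric real matrix whose spectrum is 1, λ2, λ3, λ4, λ5. -/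
/-!
A matrix commuting with `J` preserves the `J`-symmetric and the `J`-antisymmetric vectors, so
the spectrum of a bisymmetric matrix is the union of the spectra of its restrictions to these two
subspaces. We take the restrictions to be `[[0, s, √2 c], [s, 1 + λ₃ + λ₅, 0], [√2 c, 0, 0]]`,
with spectrum `1, λ₃, λ₅`, and `[[0, w], [w, λ₂ + λ₄]]`, with spectrum `λ₂, λ₄`. By Vieta this
means `w² = -λ₂λ₄`, `2c²(1 + λ₃ + λ₅) = -λ₃λ₅` and `s² + 2c² = -(λ₃ + λ₅ + λ₃λ₅)`; the
hypothesis on `λ₂λ₄` is exactly `w ≤ s`, and this, together with the ordering of the `λᵢ`, makes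
the entries `(s ± w)/2`, `c`, `(1 + λ₃ + λ₅ ± (λ₂ + λ₄))/2` of the assembled matrix nonnegative.
-/

open Matrix Polynomial

/-- The bisymmetric matrix which, in the orthonormal basis `(e₁ ± e₅)/√2`, `(e₂ ± e₄)/√2`, `e₃`,
splits into the blocks `[[0, s, √2 c], [s, t, 0], [√2 c, 0, 0]]` and `[[0, w], [w, d]]`. -/
noncomputable def bisymOfBlocks (s w c t d : ℝ) : Matrix (Fin 5) (Fin 5) ℝ :=
  !![0, (s + w) / 2, c, (s - w) / 2, 0;
     (s + w) / 2, (t + d) / 2, 0, (t - d) / 2, (s - w) / 2;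
     c, 0, 0, 0, c;
     (s - w) / 2, (t - d) / 2, 0, (t + d) / 2, (s + w) / 2;
     0, (s - w) / 2, c, (s + w) / 2, 0]

section bisymOfBlocks

variable {s w c t d : ℝ}

theorem bisymOfBlocks_isSymm : (bisymOfBlocks s w c t d).IsSymm := by
  ext i j
  fin_cases i <;> fin_cases j <;> rfl

theorem bisymOfBlocks_mul_J5 : bisymOfBlocks s w c t d * J5 = J5 * bisymOfBlocks s w c t d := by
  ext i j
  fin_cases i <;> fin_cases j <;> simp [bisymOfBlocks, J5, mul_apply, Fin.sum_univ_five]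

theorem bisymOfBlocks_nonneg (hw : |w| ≤ s) (hc : 0 ≤ c) (hd : |d| ≤ t) (i j : Fin 5) :
    0 ≤ bisymOfBlocks s w c t d i j := by
  obtain ⟨hw₁, hw₂⟩ := abs_le.mp hw
  obtain ⟨hd₁, hd₂⟩ := abs_le.mp hd
  fin_cases i <;> fin_cases j <;> simp [bisymOfBlocks] <;> linarith

theorem charpoly_bisymOfBlocks :
    (bisymOfBlocks s w c t d).charpoly =
      (X ^ 3 - C t * X ^ 2 - C (s ^ 2 + 2 * c ^ 2) * X + C (2 * c ^ 2 * t)) *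
        (X ^ 2 - C d * X - C (w ^ 2)) := by
  refine Polynomial.funext fun x => ?_
  rw [eval_charpoly]
  simp only [scalar_apply, bisymOfBlocks, det_succ_row_zero, Nat.succ_eq_add_one, Nat.reduceAdd,
    Fin.isValue, Matrix.sub_apply, of_apply, cons_val', cons_val_fin_one, cons_val_zero,
    submatrix_apply, Fin.succ_zero_eq_one, Fin.succAbove, cons_val_one, submatrix_submatrix,
    Function.comp_apply, Fin.succ_one_eq_two, cons_val, Fin.reduceSucc, det_unique,
    Fin.default_eq_zero, Fin.castSucc_zero, Fin.sum_univ_succ, Fin.coe_ofNat_eq_mod, Nat.zero_mod,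
    pow_zero, one_mul, lt_self_iff_false, ↓reduceIte, Fin.castSucc_one, Finset.univ_unique,
    Fin.val_succ, Fin.val_eq_zero, zero_add, pow_one, Fin.castSucc_succ, neg_mul, neg_sub,
    Fin.succ_pos, Finset.sum_singleton, not_lt_zero, Fin.reduceCastSucc, even_two, Even.neg_pow,
    one_pow, Fin.reduceLT, Fin.lt_one_iff, Fin.reduceEq, diagonal_apply_eq, sub_zero, ne_eq,
    not_false_eq_true, diagonal_apply_ne, zero_sub, mul_neg, sub_self, zero_mul, neg_zero,
    neg_neg, add_zero, cons_val_succ, one_ne_zero, mul_zero, zero_ne_one, map_add, map_pow,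
    map_mul, eval_mul, eval_add, eval_sub, eval_pow, eval_X, eval_C]
  ring

end bisymOfBlocks

/-- Entries `s ≥ r` and `c ≥ 0` for which the symmetric block `[[0, s, √2 c], [s, 1 + a + b, 0],
[√2 c, 0, 0]]` has spectrum `1, a, b`. -/
theorem exists_symBlock_entries {a b r : ℝ} (hab : 0 < 1 + a + b) (hprod : a * b ≤ 0)
    (hineq : -r ^ 2 - a * b - a - b ≥ -(a * b) / (1 + a + b)) :
    ∃ s c : ℝ, r ≤ s ∧ 0 ≤ c ∧ s ^ 2 + 2 * c ^ 2 = -(a + b + a * b) ∧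
      2 * c ^ 2 * (1 + a + b) = -(a * b) := by
  set c := Real.sqrt (-(a * b) / (2 * (1 + a + b)))
  have hc : c ^ 2 = -(a * b) / (2 * (1 + a + b)) :=
    Real.sq_sqrt (div_nonneg (by linarith) (by linarith))
  have hc' : 2 * c ^ 2 = -(a * b) / (1 + a + b) := by rw [hc]; field_simp
  have hs : r ^ 2 ≤ -(a + b + a * b) - 2 * c ^ 2 := by linarith
  refine ⟨Real.sqrt (-(a + b + a * b) - 2 * c ^ 2), c, Real.le_sqrt_of_sq_le hs,
    Real.sqrt_nonneg _, ?_, ?_⟩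
  · rw [Real.sq_sqrt ((sq_nonneg r).trans hs)]; ring
  · rw [hc']; field_simp

theorem stmt_12_general (l2 l3 l4 l5 : ℝ)
    (h23 : l2 ≥ l3) (h3 : l3 > 0) (h4 : 0 > l4) (h45 : l4 ≥ l5)
    (h5 : l5 ≥ -1)
    (hsum : 1 + l2 + l3 + l4 + l5 > 0)
    (hneg : 1 + l2 + l4 + l5 < 0)
    (hineq : l2 * l4 - l3 * l5 - l3 - l5 ≥ -(l3 * l5) / (1 + l3 + l5)) :
    ∃ Q : Matrix (Fin 5) (Fin 5) ℝ,
      (∀ i j, 0 ≤ Q i j) ∧ Q = Qᵀ ∧ Q * J5 = J5 * Q ∧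
      Q.charpoly = (X - C 1) * (X - C l2) * (X - C l3) * (X - C l4) * (X - C l5) := by
  obtain ⟨w, hw0, hw⟩ : ∃ w : ℝ, 0 ≤ w ∧ w ^ 2 = -(l2 * l4) :=
    ⟨_, Real.sqrt_nonneg _, Real.sq_sqrt (by nlinarith)⟩
  obtain ⟨s, c, hws, hc, hsc, hct⟩ :=
    exists_symBlock_entries (a := l3) (b := l5) (r := w) (by linarith) (by nlinarith) (by linarith)
  refine ⟨bisymOfBlocks s w c (1 + l3 + l5) (l2 + l4), bisymOfBlocks_nonneg ?_ hc ?_,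
    bisymOfBlocks_isSymm.eq.symm, bisymOfBlocks_mul_J5, ?_⟩
  · rwa [abs_of_nonneg hw0]
  · exact abs_le.mpr ⟨by linarith, by linarith⟩
  rw [charpoly_bisymOfBlocks]
  refine Polynomial.funext fun x => ?_
  simp only [eval_mul, eval_sub, eval_add, eval_pow, eval_X, eval_C]
  linear_combination (x ^ 2 - (l2 + l4) * x + l2 * l4) * (hct - x * hsc) -
    (x ^ 3 - (1 + l3 + l5) * x ^ 2 - (s ^ 2 + 2 * c ^ 2) * x + 2 * c ^ 2 * (1 + l3 + l5)) * hw

theorem stmt_12 (l2 l3 l4 l5 : ℝ)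
    (h12 : 1 ≥ l2) (h23 : l2 ≥ l3) (h3 : l3 > 0) (h4 : 0 > l4) (h45 : l4 ≥ l5)
    (h5 : l5 ≥ -1)
    (hsum : 1 + l2 + l3 + l4 + l5 > 0)
    (hneg : 1 + l2 + l4 + l5 < 0)
    (hineq : l2 * l4 - l3 * l5 - l3 - l5 ≥ -(l3 * l5) / (1 + l3 + l5)) :
    ∃ Q : Matrix (Fin 5) (Fin 5) ℝ,
      (∀ i j, 0 ≤ Q i j) ∧ Q = Qᵀ ∧ Q * J5 = J5 * Q ∧
      Q.charpoly = (X - C 1) * (X - C l2) * (X - C l3) * (X - C l4) * (X - C l5) :=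
  stmt_12_general l2 l3 l4 l5 h23 h3 h4 h45 h5 hsum hneg hineq
end

section
/- Let 1 ≥ λ2 ≥ λ3 > 0 > λ4 ≥ λ5 ≥ −1 be real numbers such that 1 + λ2 + λ3 + λ4 + λ5 = 0, 1 + λ2³ + λ3³ + λ4³ + λ5³ ≥ 0 and 1 + λ2 + λ4 + λ5 < 0. Then there exist real numbers a ≥ 0 and b ≥ 0 such that a² + b² = λ2·λ4 − λ3·λ5 − λ3 − λ5 and −(λ2+λ4)·b² − 2ab·√(−λ2·λ4) = −λ3·λ5. -/
/-!
Put `Q = λ₂λ₄ - λ₃λ₅ - λ₃ - λ₅` and `s = -(λ₂ + λ₄) > 0`. Since `1 + λ₂ + ⋯ + λ₅ = 0`, we have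
`1 + λ₂³ + ⋯ + λ₅³ = 3(λ₃λ₅ + sQ)`, so the cube condition says exactly that `-λ₃λ₅ ≤ sQ`;
as `-λ₃λ₅ ≥ 0`, also `Q ≥ 0`. Along the quarter circle `a² + b² = Q`, `a, b ≥ 0`, the expression
`s b² - 2ab√(-λ₂λ₄)` moves continuously from `0` (at `b = 0`) to `sQ` (at `a = 0`), so by the
intermediate value theorem it takes the value `-λ₃λ₅`.
-/

open Set

lemma exists_on_quarter_circle_of_mem_uIcc {Q s β c : ℝ} (hQ : 0 ≤ Q)
    (hc : c ∈ uIcc 0 (s * Q)) :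
    ∃ a b : ℝ, 0 ≤ a ∧ 0 ≤ b ∧ a ^ 2 + b ^ 2 = Q ∧ s * b ^ 2 - 2 * a * b * β = c := by
  set f : ℝ → ℝ := fun b ↦ s * b ^ 2 - 2 * √(Q - b ^ 2) * b * β
  have hf : ContinuousOn f (uIcc 0 √Q) := by fun_prop
  have hf0 : f 0 = 0 := by simp [f]
  have hfQ : f √Q = s * Q := by simp [f, Real.sq_sqrt hQ]
  obtain ⟨b, hb, rfl⟩ := intermediate_value_uIcc hf (hf0 ▸ hfQ ▸ hc)
  rw [uIcc_of_le (Real.sqrt_nonneg Q)] at hb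
  have hbQ : b ^ 2 ≤ Q := (Real.le_sqrt hb.1 hQ).mp hb.2
  refine ⟨√(Q - b ^ 2), b, Real.sqrt_nonneg _, hb.1, ?_, rfl⟩
  rw [Real.sq_sqrt (sub_nonneg.mpr hbQ)]
  ring

lemma one_add_cubes_eq_of_one_add_sum_eq_zero {R : Type*} [CommRing R] {x₂ x₃ x₄ x₅ : R}
    (h : 1 + x₂ + x₃ + x₄ + x₅ = 0) :
    1 + x₂ ^ 3 + x₃ ^ 3 + x₄ ^ 3 + x₅ ^ 3 =
      3 * (x₃ * x₅ - (x₂ + x₄) * (x₂ * x₄ - x₃ * x₅ - x₃ - x₅)) := by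
  obtain rfl : x₃ = -(1 + x₂ + x₄ + x₅) := by linear_combination h
  ring

theorem stmt_14_general (l2 l3 l4 l5 : ℝ)
    (h23 : l2 ≥ l3) (h3 : l3 > 0) (h45 : l4 ≥ l5)
    (h5 : l5 ≥ -1)
    (hsum : 1 + l2 + l3 + l4 + l5 = 0)
    (hcube : 1 + l2 ^ 3 + l3 ^ 3 + l4 ^ 3 + l5 ^ 3 ≥ 0) :
    ∃ a b : ℝ, a ≥ 0 ∧ b ≥ 0 ∧
      a ^ 2 + b ^ 2 = l2 * l4 - l3 * l5 - l3 - l5 ∧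
      -(l2 + l4) * b ^ 2 - 2 * a * b * Real.sqrt (-(l2 * l4)) = -(l3 * l5) := by
  set Q := l2 * l4 - l3 * l5 - l3 - l5
  have hs : 0 < -(l2 + l4) := by linarith
  have hl5 : l5 ≤ 0 := by linarith
  have hc : 0 ≤ -(l3 * l5) := neg_nonneg.mpr (mul_nonpos_of_nonneg_of_nonpos h3.le hl5)
  have hcQ : -(l3 * l5) ≤ -(l2 + l4) * Q := by
    linarith [one_add_cubes_eq_of_one_add_sum_eq_zero hsum]
  have hQ : 0 ≤ Q := nonneg_of_mul_nonneg_right (hc.trans hcQ) hs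
  exact exists_on_quarter_circle_of_mem_uIcc hQ (Icc_subset_uIcc ⟨hc, hcQ⟩)

theorem stmt_14 (l2 l3 l4 l5 : ℝ)
    (h12 : 1 ≥ l2) (h23 : l2 ≥ l3) (h3 : l3 > 0) (h4 : 0 > l4) (h45 : l4 ≥ l5)
    (h5 : l5 ≥ -1)
    (hsum : 1 + l2 + l3 + l4 + l5 = 0)
    (hcube : 1 + l2 ^ 3 + l3 ^ 3 + l4 ^ 3 + l5 ^ 3 ≥ 0)
    (hneg : 1 + l2 + l4 + l5 < 0) :
    ∃ a b : ℝ, a ≥ 0 ∧ b ≥ 0 ∧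
      a ^ 2 + b ^ 2 = l2 * l4 - l3 * l5 - l3 - l5 ∧
      -(l2 + l4) * b ^ 2 - 2 * a * b * Real.sqrt (-(l2 * l4)) = -(l3 * l5) :=
  stmt_14_general l2 l3 l4 l5 h23 h3 h45 h5 hsum hcube
end

section
/- Let λ2, λ3, λ4, λ5 be real numbers with λ2 > 0 > λ4 and 1 + λ2 + λ3 + λ4 + λ5 = 0, and suppose real numbers a, b satisfy a² + b² = λ2·λ4 − λ3·λ5 − λ3 − λ5 and −(λ2+λ4)·b² − 2ab·√(−λ2·λ4) = −λ3·λ5. Then the 3×3 symmetric matrix U with rows (0, a, b), (a, −(λ2+λ4), √(−λ2·λ4)), (b, √(−λ2·λ4), 0) has characteristic polynomial (X − 1)(X − λ3)(X − λ5). -/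
open Matrix Polynomial

/-! Compare coefficients: the trace, the sum of principal 2×2 minors and the determinant of `U`
are the elementary symmetric functions of `1, λ3, λ5` exactly by `hsum`, `heq1` and `heq2`,
once `√(-λ2 λ4)² = -λ2 λ4`. -/

theorem charpoly_fin_three_of_zero_first_last_diag {R : Type*} [CommRing R] (a b s t : R) :
    (!![0, a, b; a, t, s; b, s, 0] : Matrix (Fin 3) (Fin 3) R).charpoly =
      X ^ 3 - C t * X ^ 2 - C (a ^ 2 + b ^ 2 + s ^ 2) * X - C (2 * a * b * s - t * b ^ 2) := by
  rw [Matrix.charpoly, Matrix.det_fin_three]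
  simp only [charmatrix_apply, diagonal_apply, of_apply, cons_val', cons_val_zero, cons_val_one,
    cons_val_two, cons_val_fin_one, head_cons, head_fin_const, tail_cons, empty_val', Fin.reduceEq,
    if_true, if_false, map_zero, map_add, map_sub, map_mul, map_pow, map_ofNat]
  ring

theorem stmt_15 (l2 l3 l4 l5 a b : ℝ)
    (h2 : l2 > 0) (h4 : 0 > l4)
    (hsum : 1 + l2 + l3 + l4 + l5 = 0)
    (heq1 : a ^ 2 + b ^ 2 = l2 * l4 - l3 * l5 - l3 - l5)
    (heq2 : -(l2 + l4) * b ^ 2 - 2 * a * b * Real.sqrt (-(l2 * l4)) = -(l3 * l5)) :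
    let U : Matrix (Fin 3) (Fin 3) ℝ :=
      !![0, a, b;
         a, -(l2 + l4), Real.sqrt (-(l2 * l4));
         b, Real.sqrt (-(l2 * l4)), 0]
    U.charpoly = (X - C 1) * (X - C l3) * (X - C l5) := by
  intro U
  have hsq : Real.sqrt (-(l2 * l4)) ^ 2 = -(l2 * l4) := Real.sq_sqrt (by nlinarith)
  have htrace : -(l2 + l4) = 1 + l3 + l5 := by linarith
  have hminors : a ^ 2 + b ^ 2 + Real.sqrt (-(l2 * l4)) ^ 2 = -(l3 + l5 + l3 * l5) := by
    rw [hsq]; linarith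
  have hdet : 2 * a * b * Real.sqrt (-(l2 * l4)) - -(l2 + l4) * b ^ 2 = l3 * l5 := by linarith
  rw [charpoly_fin_three_of_zero_first_last_diag, hminors, hdet, htrace]
  simp only [map_add, map_neg, map_mul, map_one]
  ring
end

section
/- Let p be a real number, x = (x1, x2) ∈ ℝ², and let X and Y be symmetric 2×2 real matrices. Let J₂ be the 2×2 exchange matrix (rows (0,1),(1,0)), set A = (X+Y)/2 and C = J₂(X−Y)/2, and let Q be the 5×5 matrix given in block form by Q = [[A, x/√2, J₂CJ₂], [xᵀ/√2, p, xᵀJ₂/√2], [C, J₂x/√2, J₂AJ₂]] (with x regarded as a 2×1 column). Then: (i) Q is bisymmetric; (ii) the characteristic polynomial of Q equals the product of the characteristic polynomial of the 3×3 matrix M = [[p, xᵀ],[x, X]] and the characteristic polynomial of Y; and (iii) Q is nonnegative if and only if p ≥ 0, x1 ≥ 0, x2 ≥ 0, and the matrices X+Y and X−Y are nonnegative. -/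
/-!
Let `U` be the `3 × 5` matrix whose rows `e₂, (e₀ + e₄)/√2, (e₁ + e₃)/√2` are an orthonormal basis
of the vectors fixed by `J`, and `V` the `2 × 5` matrix whose rows `(e₀ - e₄)/√2, (e₁ - e₃)/√2`
are an orthonormal basis of those negated by `J`. A direct computation gives
`Q = Uᵀ M U + Vᵀ Y V`, i.e. `Q` is orthogonally similar to the block diagonal matrix `M ⊕ Y`.
This gives the characteristic polynomial; symmetry of `Q` comes from that of `M` and `Y`, and
`Q J = J Q` because `J` acts as `1` on the rows of `U` and as `-1` on the rows of `V`.
Nonnegativity is read off the entries of `Q`.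
-/

open Matrix Polynomial

namespace Matrix

variable {R : Type*} [CommRing R] {m n k : Type*} [Fintype m] [Fintype k]

theorem IsSymm.transpose_mul_mul_add {U : Matrix m n R} {V : Matrix k n R}
    {M : Matrix m m R} {Y : Matrix k k R} (hM : M.IsSymm) (hY : Y.IsSymm) :
    (Uᵀ * M * U + Vᵀ * Y * V).IsSymm := by
  simp [IsSymm, transpose_add, transpose_mul, hM.eq, hY.eq, Matrix.mul_assoc]

variable [Fintype n]

theorem commute_transpose_mul_mul_add {U : Matrix m n R} {V : Matrix k n R} {J : Matrix n n R}
    (M : Matrix m m R) (Y : Matrix k k R) (hJ : J.IsSymm) (hU : U * J = U) (hV : V * J = -V) :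
    Commute (Uᵀ * M * U + Vᵀ * Y * V) J := by
  have hJU : J * Uᵀ = Uᵀ := by rw [← hJ.eq, ← transpose_mul, hU]
  have hJV : J * Vᵀ = -Vᵀ := by rw [← hJ.eq, ← transpose_mul, hV, transpose_neg]
  simp only [Commute, SemiconjBy, add_mul, mul_add, Matrix.mul_assoc, hU, hV]
  simp only [← Matrix.mul_assoc, hJU, hJV]
  simp

variable [DecidableEq m] [DecidableEq n] [DecidableEq k]

theorem charpoly_mul_mul_of_mul_eq_one (U : Matrix n m R) (V : Matrix m n R) (D : Matrix m m R)
    (hVU : V * U = 1) (hcard : Fintype.card m = Fintype.card n) :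
    (U * D * V).charpoly = D.charpoly := by
  have h := charpoly_mul_comm' U (D * V)
  rw [hcard, Matrix.mul_assoc D, hVU, Matrix.mul_one, ← Matrix.mul_assoc] at h
  exact (isRegular_X_pow _).left h

theorem charpoly_transpose_mul_mul_add (U : Matrix m n R) (V : Matrix k n R)
    (M : Matrix m m R) (Y : Matrix k k R) (hU : U * Uᵀ = 1) (hV : V * Vᵀ = 1)
    (hUV : U * Vᵀ = 0) (hcard : Fintype.card m + Fintype.card k = Fintype.card n) :
    (Uᵀ * M * U + Vᵀ * Y * V).charpoly = M.charpoly * Y.charpoly := by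
  have hVU : V * Uᵀ = 0 := by rw [← transpose_transpose V, ← transpose_mul, hUV, transpose_zero]
  have hblock : Uᵀ * M * U + Vᵀ * Y * V =
      (fromRows U V)ᵀ * fromBlocks M 0 0 Y * fromRows U V := by
    simp [transpose_fromRows, fromCols_mul_fromBlocks, fromCols_mul_fromRows]
  have horth : fromRows U V * (fromRows U V)ᵀ = 1 := by
    rw [transpose_fromRows, fromRows_mul_fromCols, hU, hV, hUV, hVU, fromBlocks_one]
  rw [hblock, charpoly_mul_mul_of_mul_eq_one _ _ _ horth (by simpa using hcard),
    charpoly_fromBlocks_zero₁₂]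

end Matrix

noncomputable def symmetricFrame : Matrix (Fin 3) (Fin 5) ℝ :=
  let c := (√2)⁻¹
  !![0, 0, 1, 0, 0;
     c, 0, 0, 0, c;
     0, c, 0, c, 0]

noncomputable def skewFrame : Matrix (Fin 2) (Fin 5) ℝ :=
  let c := (√2)⁻¹
  !![c, 0, 0, 0, -c;
     0, c, 0, -c, 0]

theorem inv_sqrt_two_mul_self : (√2)⁻¹ * (√2)⁻¹ = (2⁻¹ : ℝ) := by
  rw [← mul_inv, Real.mul_self_sqrt zero_le_two]

theorem isSymm_J5 : J5.IsSymm := by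
  ext i j
  simp [J5, add_comm]

theorem symmetricFrame_mul_J5 : symmetricFrame * J5 = symmetricFrame := by
  ext i j
  fin_cases i <;> fin_cases j <;> simp [symmetricFrame, J5, mul_apply, Fin.sum_univ_five]

theorem skewFrame_mul_J5 : skewFrame * J5 = -skewFrame := by
  ext i j
  fin_cases i <;> fin_cases j <;> simp [skewFrame, J5, mul_apply, Fin.sum_univ_five]

theorem symmetricFrame_mul_transpose : symmetricFrame * symmetricFrameᵀ = 1 := by
  ext i j
  fin_cases i <;> fin_cases j <;>
    simp [symmetricFrame, mul_apply, Fin.sum_univ_five, inv_sqrt_two_mul_self] <;> norm_num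

theorem skewFrame_mul_transpose : skewFrame * skewFrameᵀ = 1 := by
  ext i j
  fin_cases i <;> fin_cases j <;>
    simp [skewFrame, mul_apply, Fin.sum_univ_five, inv_sqrt_two_mul_self] <;> norm_num

theorem symmetricFrame_mul_skewFrame_transpose : symmetricFrame * skewFrameᵀ = 0 := by
  ext i j
  fin_cases i <;> fin_cases j <;> simp [symmetricFrame, skewFrame, mul_apply, Fin.sum_univ_five]

theorem stmt_16 (p x1 x2 : ℝ) (Xm Ym : Matrix (Fin 2) (Fin 2) ℝ)
    (hX : Xm = Xmᵀ) (hY : Ym = Ymᵀ) :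
    let J2 : Matrix (Fin 2) (Fin 2) ℝ := !![0, 1; 1, 0]
    let A : Matrix (Fin 2) (Fin 2) ℝ := (2⁻¹ : ℝ) • (Xm + Ym)
    let Cm : Matrix (Fin 2) (Fin 2) ℝ := (2⁻¹ : ℝ) • (J2 * (Xm - Ym))
    let Q : Matrix (Fin 5) (Fin 5) ℝ :=
      !![A 0 0, A 0 1, x1 / Real.sqrt 2, (J2 * Cm * J2) 0 0, (J2 * Cm * J2) 0 1;
         A 1 0, A 1 1, x2 / Real.sqrt 2, (J2 * Cm * J2) 1 0, (J2 * Cm * J2) 1 1;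
         x1 / Real.sqrt 2, x2 / Real.sqrt 2, p, x2 / Real.sqrt 2, x1 / Real.sqrt 2;
         Cm 0 0, Cm 0 1, x2 / Real.sqrt 2, (J2 * A * J2) 0 0, (J2 * A * J2) 0 1;
         Cm 1 0, Cm 1 1, x1 / Real.sqrt 2, (J2 * A * J2) 1 0, (J2 * A * J2) 1 1]
    let M : Matrix (Fin 3) (Fin 3) ℝ :=
      !![p, x1, x2;
         x1, Xm 0 0, Xm 0 1;
         x2, Xm 1 0, Xm 1 1]
    (Q = Qᵀ ∧ Q * J5 = J5 * Q) ∧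
    Q.charpoly = M.charpoly * Ym.charpoly ∧
    ((∀ i j, 0 ≤ Q i j) ↔
      0 ≤ p ∧ 0 ≤ x1 ∧ 0 ≤ x2 ∧
        (∀ i j, 0 ≤ (Xm + Ym) i j) ∧ (∀ i j, 0 ≤ (Xm - Ym) i j)) := by
  intro J2 A Cm Q M
  have hx : Xm 1 0 = Xm 0 1 := congrFun (congrFun hX 1) 0
  have hy : Ym 1 0 = Ym 0 1 := congrFun (congrFun hY 1) 0
  have hQ : Q = symmetricFrameᵀ * M * symmetricFrame + skewFrameᵀ * Ym * skewFrame := by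
    ext i j
    fin_cases i <;> fin_cases j <;>
      simp only [Q, A, Cm, J2, M, symmetricFrame, skewFrame, mul_apply, Fin.sum_univ_two,
        Fin.sum_univ_three, Matrix.smul_apply, Matrix.add_apply, Matrix.sub_apply,
        transpose_apply, smul_eq_mul] <;>
      simp <;>
      simp only [← inv_sqrt_two_mul_self, div_eq_inv_mul] <;>
      ring
  have hM : M.IsSymm := IsSymm.ext fun i j => by fin_cases i <;> fin_cases j <;> simp [M, hx]
  refine ⟨⟨?_, ?_⟩, ?_, ?_⟩
  · rw [hQ]
    exact (IsSymm.transpose_mul_mul_add hM hY.symm).symm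
  · rw [hQ]
    exact (commute_transpose_mul_mul_add M Ym isSymm_J5 symmetricFrame_mul_J5 skewFrame_mul_J5).eq
  · rw [hQ]
    exact charpoly_transpose_mul_mul_add _ _ M Ym symmetricFrame_mul_transpose
      skewFrame_mul_transpose symmetricFrame_mul_skewFrame_transpose (by simp)
  · simp only [Q, A, Cm, J2, mul_apply, Fin.sum_univ_two, Matrix.smul_apply, Matrix.add_apply,
      Matrix.sub_apply, smul_eq_mul, div_eq_inv_mul]
    simp only [Fin.isValue, of_apply, cons_val', cons_val_zero, cons_val_fin_one, zero_mul,
      cons_val_one, hx, hy, one_mul, zero_add, add_zero, mul_zero, mul_one, Fin.forall_fin_succ,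
      cons_val_succ, forall_const, inv_pos, Nat.ofNat_pos, mul_nonneg_iff_of_pos_left,
      Real.sqrt_pos, sub_nonneg, Fin.succ_zero_eq_one, IsEmpty.forall_iff, and_true]
    tauto
end

section
/- Let 1 ≥ λ2 ≥ λ3 > 0 > λ4 ≥ λ5 ≥ −1 be real numbers such that 1 + λ2 + λ3 + λ4 + λ5 > 0, 1 + λ2 + λ4 + λ5 < 0, and λ2·λ4 − λ3·λ5 − λ3 − λ5 ≥ −λ3·λ5/(1 + λ3 + λ5). Then there exist real numbers a ≥ 0 and b ≥ 0 such that a² + b² = λ2·λ4 − λ3·λ5 − λ3 − λ5 and (1 + λ3 + λ5)·b² − 2ab·√(−λ2·λ4) = −λ3·λ5. -/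
/-! Put `a = √(S - t)`, `b = √t` with `S = λ2λ4 - λ3λ5 - λ3 - λ5`. The left-hand side of the
second equation is then a continuous function of `t ∈ [0, S]` that is `0` at `t = 0` and
`(1 + λ3 + λ5) S` at `t = S`. Once the positive denominator `1 + λ3 + λ5` is cleared, the last
hypothesis says exactly that `-λ3λ5` lies between the two, so the intermediate value theorem
gives `t`. -/

theorem exists_nonneg_sq_add_sq_eq_and_eq_of_le {S c K q : ℝ} (hS : 0 ≤ S) (hq : 0 ≤ q)
    (hqS : q ≤ c * S) :
    ∃ a b : ℝ, a ≥ 0 ∧ b ≥ 0 ∧ a ^ 2 + b ^ 2 = S ∧ c * b ^ 2 - 2 * a * b * K = q := by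
  let g : ℝ → ℝ := fun t => c * t - 2 * √(S - t) * √t * K
  have hg : ContinuousOn g (Set.Icc 0 S) := by fun_prop
  have hq_mem : q ∈ Set.Icc (g 0) (g S) := by simpa [g] using ⟨hq, hqS⟩
  obtain ⟨t, ⟨ht0, htS⟩, hgt⟩ := intermediate_value_Icc hS hg hq_mem
  refine ⟨√(S - t), √t, Real.sqrt_nonneg _, Real.sqrt_nonneg _, ?_, ?_⟩
  · rw [Real.sq_sqrt (sub_nonneg.mpr htS), Real.sq_sqrt ht0]
    ring
  · rw [Real.sq_sqrt ht0]
    exact hgt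

theorem stmt_17_general (l2 l3 l4 l5 : ℝ)
    (h3 : l3 > 0) (h4 : 0 > l4) (h45 : l4 ≥ l5)
    (h5 : l5 ≥ -1)
    (hineq : l2 * l4 - l3 * l5 - l3 - l5 ≥ -(l3 * l5) / (1 + l3 + l5)) :
    ∃ a b : ℝ, a ≥ 0 ∧ b ≥ 0 ∧
      a ^ 2 + b ^ 2 = l2 * l4 - l3 * l5 - l3 - l5 ∧
      (1 + l3 + l5) * b ^ 2 - 2 * a * b * Real.sqrt (-(l2 * l4)) = -(l3 * l5) := by
  have hc : 0 < 1 + l3 + l5 := by linarith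
  have hq : 0 ≤ -(l3 * l5) := 
    neg_nonneg.mpr (mul_neg_of_pos_of_neg h3 (h45.trans_lt h4)).le
  have hqS : -(l3 * l5) ≤ (1 + l3 + l5) * (l2 * l4 - l3 * l5 - l3 - l5) := by
    rw [ge_iff_le, div_le_iff₀ hc] at hineq
    linarith
  have hS : 0 ≤ l2 * l4 - l3 * l5 - l3 - l5 := nonneg_of_mul_nonneg_right (hq.trans hqS) hc
  exact exists_nonneg_sq_add_sq_eq_and_eq_of_le hS hq hqS

theorem stmt_17 (l2 l3 l4 l5 : ℝ)
    (h12 : 1 ≥ l2) (h23 : l2 ≥ l3) (h3 : l3 > 0) (h4 : 0 > l4) (h45 : l4 ≥ l5)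
    (h5 : l5 ≥ -1)
    (hsum : 1 + l2 + l3 + l4 + l5 > 0)
    (hneg : 1 + l2 + l4 + l5 < 0)
    (hineq : l2 * l4 - l3 * l5 - l3 - l5 ≥ -(l3 * l5) / (1 + l3 + l5)) :
    ∃ a b : ℝ, a ≥ 0 ∧ b ≥ 0 ∧
      a ^ 2 + b ^ 2 = l2 * l4 - l3 * l5 - l3 - l5 ∧
      (1 + l3 + l5) * b ^ 2 - 2 * a * b * Real.sqrt (-(l2 * l4)) = -(l3 * l5) :=
  stmt_17_general l2 l3 l4 l5 h3 h4 h45 h5 hineq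
end
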